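/- arXiv:2104.05771 — 3 statements merged into one kernel-verified Lean document; each statement's English description precedes it below -/
import Mathlib

section
/- Let G = (L, R, E) be a bipartite graph with nonnegative, pairwise-distinct edge weights and let p > 1/2. In the AOSp model, each u ∈ L is placed in the history set H independently with probability p, and O = L \ H. Let H' ⊆ H contain each vertex of H independently with probability (1−p)/p. Then the greedy-based algorithm run with sample L' = H' (candidate edge of u ∈ O is the edge at u in Greedy(G[H' ∪ {u}]), added to M on arrival if its right endpoint is unmatched) satisfies E[w(M)] ≥ (1/4) · E[OPT(G[O])] for any adversarial arrival order of O. -/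
open Finset

open scoped Classical

/-- Greedy matching with fuel: repeatedly pick the maximum-weight remaining edge and
discard all edges conflicting with it. -/
noncomputable def greedyAux {α : Type*} [DecidableEq α] (w : α → ℝ)
    (conflict : α → α → Prop) : ℕ → Finset α → Finset α
  | 0, _ => ∅
  | n + 1, F =>
    if h : F.Nonempty then
      let e := (F.exists_max_image w h).choose
      insert e (greedyAux w conflict n (F.filter fun f => ¬ conflict e f))
    else ∅

/-- The greedy matching of an edge set `F`: process edges in decreasing order of weight,
adding an edge whenever it conflicts with no previously added edge. -/
noncomputable def greedy {α : Type*} [DecidableEq α] (w : α → ℝ)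
    (conflict : α → α → Prop) (F : Finset α) : Finset α :=
  greedyAux w conflict F.card F

/-- Two edges of a bipartite graph conflict iff they share an endpoint. -/
def bconf {L R : Type*} (e f : L × R) : Prop := e.1 = f.1 ∨ e.2 = f.2

/-- The edge set of the subgraph `G[U ∪ R]` induced by a set `U` of left vertices
(together with the whole right side). -/
def subL {L R : Type*} [DecidableEq L] (E : Finset (L × R)) (U : Finset L) :
    Finset (L × R) :=
  E.filter fun e => e.1 ∈ U

/-- Expectation of `f` over a random subset of `s` containing each element
independently with probability `p`. -/
noncomputable def expSubsets {ι : Type*} (p : ℝ) (s : Finset ι) (f : Finset ι → ℝ) : ℝ :=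
  ∑ A ∈ s.powerset, p ^ A.card * (1 - p) ^ (s.card - A.card) * f A

/-- A set of edges is a matching if no two distinct edges conflict. -/
def isMatching {α : Type*} (conflict : α → α → Prop) (M : Finset α) : Prop :=
  ∀ e ∈ M, ∀ f ∈ M, e ≠ f → ¬ conflict e f

/-- `OPT`: the maximum total weight of a matching contained in the edge set `E`. -/
noncomputable def optWeight {α : Type*} (w : α → ℝ) (conflict : α → α → Prop)
    (E : Finset α) : ℝ :=
  (E.powerset.filter fun M => isMatching conflict M).sup'
    ⟨∅, Finset.mem_filter.mpr ⟨Finset.empty_mem_powerset _,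
        fun e he => absurd he (Finset.notMem_empty e)⟩⟩
    (fun M => ∑ e ∈ M, w e)

/-- One step of the greedy-based online algorithm with sample `L'`: the arriving
vertex `u` gets as candidate the edge incident to `u` in `Greedy(G[L' ∪ {u}])`, and
the candidate edge is added if its right endpoint is not yet matched. -/
noncomputable def stepB {L R : Type*} [DecidableEq L] [DecidableEq R]
    (E : Finset (L × R)) (w : L × R → ℝ) (L' : Finset L)
    (M : Finset (L × R)) (u : L) : Finset (L × R) :=
  M ∪ (greedy w bconf (subL E (insert u L'))).filter
      (fun e => e.1 = u ∧ ∀ f ∈ M, f.2 ≠ e.2)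

/-- The output matching of the greedy-based online algorithm with sample `L'`,
when the online vertices arrive in the order given by `order`. -/
noncomputable def runB {L R : Type*} [DecidableEq L] [DecidableEq R]
    (E : Finset (L × R)) (w : L × R → ℝ) (L' : Finset L) (order : List L) :
    Finset (L × R) :=
  order.foldl (stepB E w L') ∅



set_option linter.unusedSectionVars false

section Basics

variable {L R : Type*} [DecidableEq L] [DecidableEq R] (w : L × R → ℝ)

lemma bconf_refl (e : L × R) : bconf e e := Or.inl rfl

lemma bconf_symm {e f : L × R} (h : bconf e f) : bconf f e := by
  rcases h with h | h
  · exact Or.inl h.symm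
  · exact Or.inr h.symm

lemma greedyAux_empty (c : (L × R) → (L × R) → Prop) (n : ℕ) :
    greedyAux w c n (∅ : Finset (L × R)) = ∅ := by
  cases n <;> simp [greedyAux]

lemma greedyAux_succ (c : (L × R) → (L × R) → Prop) (n : ℕ) (F : Finset (L × R))
    (h : F.Nonempty) :
    greedyAux w c (n + 1) F =
      insert (F.exists_max_image w h).choose
        (greedyAux w c n (F.filter fun f => ¬ c (F.exists_max_image w h).choose f)) := by
  simp only [greedyAux, dif_pos h]

lemma greedyAux_subset (c : (L × R) → (L × R) → Prop) :
    ∀ (n : ℕ) (F : Finset (L × R)), greedyAux w c n F ⊆ F := by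
  intro n
  induction n with
  | zero => intro F; simp [greedyAux]
  | succ n ih =>
    intro F
    by_cases h : F.Nonempty
    · rw [greedyAux_succ w c n F h]
      intro x hx
      rcases Finset.mem_insert.mp hx with rfl | hx
      · exact (F.exists_max_image w h).choose_spec.1
      · exact Finset.filter_subset _ _ (ih _ hx)
    · simp [greedyAux, dif_neg h]

lemma greedyAux_matching : ∀ (n : ℕ) (F : Finset (L × R)),
    isMatching bconf (greedyAux w bconf n F) := by
  intro n
  induction n with
  | zero => intro F; intro e he; simp [greedyAux] at he
  | succ n ih =>
    intro F
    by_cases h : F.Nonempty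
    · rw [greedyAux_succ w bconf n F h]
      set e0 := (F.exists_max_image w h).choose with he0
      intro e he f hf hne
      rcases Finset.mem_insert.mp he with rfl | he
      · rcases Finset.mem_insert.mp hf with rfl | hf
        · exact absurd rfl hne
        · have hf' := greedyAux_subset w bconf n _ hf
          exact (Finset.mem_filter.mp hf').2
      · rcases Finset.mem_insert.mp hf with rfl | hf
        · have he' := greedyAux_subset w bconf n _ he
          intro hc
          exact (Finset.mem_filter.mp he').2 (bconf_symm hc)
        · exact ih _ e he f hf hne
    · simp only [greedyAux, dif_neg h]
      intro e he; simp at he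

lemma card_filter_not_bconf_lt {F : Finset (L × R)} {e : L × R} (he : e ∈ F) :
    (F.filter fun f => ¬ bconf e f).card < F.card := by
  have hsub : (F.filter fun f => ¬ bconf e f) ⊆ F.erase e := by
    intro x hx
    rcases Finset.mem_filter.mp hx with ⟨hxF, hxc⟩
    refine Finset.mem_erase.mpr ⟨?_, hxF⟩
    rintro rfl; exact hxc (bconf_refl _)
  calc (F.filter fun f => ¬ bconf e f).card ≤ (F.erase e).card := Finset.card_le_card hsub
    _ < F.card := Finset.card_erase_lt_of_mem he

lemma greedyAux_fuel_succ : ∀ (n : ℕ) (F : Finset (L × R)), F.card ≤ n →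
    greedyAux w bconf n F = greedyAux w bconf (n + 1) F := by
  intro n
  induction n with
  | zero =>
    intro F hF
    have : F = ∅ := Finset.card_eq_zero.mp (Nat.le_zero.mp hF)
    subst this; simp [greedyAux_empty]
  | succ n ih =>
    intro F hF
    by_cases h : F.Nonempty
    · rw [greedyAux_succ w bconf n F h, greedyAux_succ w bconf (n+1) F h]
      congr 1
      apply ih
      have := card_filter_not_bconf_lt (F := F) (e := (F.exists_max_image w h).choose) (F.exists_max_image w h).choose_spec.1
      omega
    · rw [Finset.not_nonempty_iff_eq_empty] at h; subst h; simp [greedyAux_empty]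

lemma greedyAux_fuel : ∀ (m : ℕ) (n : ℕ) (F : Finset (L × R)), F.card ≤ n → n ≤ m →
    greedyAux w bconf n F = greedyAux w bconf m F := by
  intro m
  induction m with
  | zero => intro n F _ h2; interval_cases n; rfl
  | succ m ih =>
    intro n F h1 h2
    rcases Nat.lt_or_ge n (m+1) with h | h
    · have hn : n ≤ m := by omega
      rw [ih n F h1 hn]
      exact greedyAux_fuel_succ w m F (le_trans h1 hn)
    · have : n = m + 1 := by omega
      subst this; rfl

lemma greedy_eq_aux (n : ℕ) (F : Finset (L × R)) (h : F.card ≤ n) :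
    greedy w bconf F = greedyAux w bconf n F := by
  rw [greedy]
  exact greedyAux_fuel w n F.card F le_rfl h

lemma greedy_subset (F : Finset (L × R)) : greedy w bconf F ⊆ F :=
  greedyAux_subset w bconf F.card F

lemma greedy_matching (F : Finset (L × R)) : isMatching bconf (greedy w bconf F) :=
  greedyAux_matching w F.card F

end Basics

section Core

variable {L R : Type*} [DecidableEq L] [DecidableEq R] (w : L × R → ℝ)

/-- Edge `e` is eligible w.r.t. a matching `M`: every edge of `M` at the same right
vertex is strictly lighter. -/
def elig (M : Finset (L × R)) (e : L × R) : Prop := ∀ f ∈ M, f.2 = e.2 → w f < w e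

lemma elig_anti {M M' : Finset (L × R)} (h : M ⊆ M') {e : L × R}
    (he : elig w M' e) : elig w M e := fun f hf => he f (h hf)

/-- Core comparison of greedy runs on `F` and on `F ∪ D`, where `D` is a set of
edges all incident to a new left vertex `v`. -/
theorem core : ∀ (n : ℕ) (F D : Finset (L × R)) (v : L),
    (∀ d ∈ D, d.1 = v) → (∀ f ∈ F, f.1 ≠ v) →
    Set.InjOn w ↑(F ∪ D) → F.card + D.card ≤ n →
    (greedyAux w bconf n (F ∪ D) = greedyAux w bconf n F ∧
      ∀ d ∈ D, ¬ elig w (greedyAux w bconf n F) d) ∨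
    (∃ d ∈ D, d ∈ greedyAux w bconf n (F ∪ D) ∧ elig w (greedyAux w bconf n F) d ∧
      (∀ d' ∈ D, elig w (greedyAux w bconf n F) d' → w d' ≤ w d) ∧
      (∀ e, w d < w e → (e ∈ greedyAux w bconf n (F ∪ D) ↔ e ∈ greedyAux w bconf n F))) := by
  intro n
  induction n with
  | zero =>
    intro F D v hD hF hinj hcard
    have hF0 : F = ∅ := Finset.card_eq_zero.mp (by omega)
    have hD0 : D = ∅ := Finset.card_eq_zero.mp (by omega)
    subst hF0; subst hD0
    left
    constructor
    · simp
    · intro d hd; simp at hd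
  | succ n ih =>
    intro F D v hD hF hinj hcard
    by_cases hFD : (F ∪ D).Nonempty
    · set e0 := ((F ∪ D).exists_max_image w hFD).choose with he0def
      have he0mem : e0 ∈ F ∪ D := ((F ∪ D).exists_max_image w hFD).choose_spec.1
      have he0max : ∀ x ∈ F ∪ D, w x ≤ w e0 := ((F ∪ D).exists_max_image w hFD).choose_spec.2
      have hGFD : greedyAux w bconf (n+1) (F ∪ D) =
          insert e0 (greedyAux w bconf n ((F ∪ D).filter fun f => ¬ bconf e0 f)) :=
        greedyAux_succ w bconf n (F ∪ D) hFD
      rcases Finset.mem_union.mp he0mem with he0F | he0D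
      · -- the max edge lies in F
        have hFne : F.Nonempty := ⟨e0, he0F⟩
        have heF : (F.exists_max_image w hFne).choose = e0 := by
          have h1 : (F.exists_max_image w hFne).choose ∈ F :=
            (F.exists_max_image w hFne).choose_spec.1
          have h2 : ∀ x ∈ F, w x ≤ w (F.exists_max_image w hFne).choose :=
            (F.exists_max_image w hFne).choose_spec.2
          have hle1 : w (F.exists_max_image w hFne).choose ≤ w e0 :=
            he0max _ (Finset.mem_union_left _ h1)
          have hle2 : w e0 ≤ w (F.exists_max_image w hFne).choose := h2 _ he0F
          exact hinj (Finset.mem_coe.mpr (Finset.mem_union_left _ h1))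
            (Finset.mem_coe.mpr he0mem) (le_antisymm hle1 hle2)
        have hGF : greedyAux w bconf (n+1) F =
            insert e0 (greedyAux w bconf n (F.filter fun f => ¬ bconf e0 f)) := by
          rw [greedyAux_succ w bconf n F hFne, heF]
        set F1 := F.filter fun f => ¬ bconf e0 f with hF1
        set D1 := D.filter fun f => ¬ bconf e0 f with hD1
        have hsplit : (F ∪ D).filter (fun f => ¬ bconf e0 f) = F1 ∪ D1 :=
          Finset.filter_union _ _ _
        have hdisj : Disjoint F1 D1 := by
          rw [Finset.disjoint_left]
          intro a haF haD
          exact hF a (Finset.mem_filter.mp haF).1 (hD a (Finset.mem_filter.mp haD).1)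
        have hcard1 : F1.card + D1.card ≤ n := by
          have h1 : F1 ∪ D1 ⊆ (F ∪ D).erase e0 := by
            rw [← hsplit]
            intro x hx
            rcases Finset.mem_filter.mp hx with ⟨hx1, hx2⟩
            refine Finset.mem_erase.mpr ⟨?_, hx1⟩
            rintro rfl; exact hx2 (bconf_refl _)
          have h2 : (F1 ∪ D1).card ≤ (F ∪ D).card - 1 := by
            calc (F1 ∪ D1).card ≤ ((F ∪ D).erase e0).card := Finset.card_le_card h1
              _ = (F ∪ D).card - 1 := Finset.card_erase_of_mem he0mem
          have h3 : (F ∪ D).card ≤ F.card + D.card := Finset.card_union_le _ _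
          have h4 : 1 ≤ (F ∪ D).card := Finset.card_pos.mpr hFD
          have h5 : (F1 ∪ D1).card = F1.card + D1.card :=
            Finset.card_union_of_disjoint hdisj
          omega
        have hD1v : ∀ d ∈ D1, d.1 = v := fun d hd => hD d (Finset.mem_filter.mp hd).1
        have hF1v : ∀ f ∈ F1, f.1 ≠ v := fun f hf => hF f (Finset.mem_filter.mp hf).1
        have hinj1 : Set.InjOn w ↑(F1 ∪ D1) := by
          apply hinj.mono
          rw [← hsplit]
          exact_mod_cast Finset.filter_subset _ _
        rcases ih F1 D1 v hD1v hF1v hinj1 hcard1 with ⟨heq, hnel⟩ | ⟨d, hdD1, hdmem, hdel, hdmax, hpre⟩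
        · -- case (A) lifts
          left
          rw [hGFD, hGF, hsplit]
          constructor
          · rw [heq]
          · intro d hd
            by_cases hd1 : d ∈ D1
            · intro hel
              exact hnel d hd1 (elig_anti w (Finset.subset_insert _ _) hel)
            · -- d conflicts with e0, so d.2 = e0.2
              have hbc : bconf e0 d := by
                by_contra hbc
                exact hd1 (Finset.mem_filter.mpr ⟨hd, hbc⟩)
              have hd2 : e0.2 = d.2 := by
                rcases hbc with h | h
                · exact absurd (h.trans (hD d hd)) (hF e0 he0F)
                · exact h
              intro hel
              have := hel e0 (Finset.mem_insert_self _ _) hd2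
              have hle := he0max d (Finset.mem_union_right _ hd)
              linarith
        · -- case (B) lifts
          right
          refine ⟨d, (Finset.mem_filter.mp hdD1).1, ?_, ?_, ?_, ?_⟩
          · rw [hGFD, hsplit]; exact Finset.mem_insert_of_mem hdmem
          · rw [hGF]
            intro f hf
            rcases Finset.mem_insert.mp hf with rfl | hf
            · intro hfd
              have : ¬ bconf e0 d := (Finset.mem_filter.mp hdD1).2
              exact absurd (Or.inr hfd) this
            · exact hdel f hf
          · intro d' hd' held'
            by_cases hd1 : d' ∈ D1
            · apply hdmax d' hd1
              exact elig_anti w (by rw [hGF]; exact Finset.subset_insert _ _) held'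
            · have hbc : bconf e0 d' := by
                by_contra hbc
                exact hd1 (Finset.mem_filter.mpr ⟨hd', hbc⟩)
              have hd2 : e0.2 = d'.2 := by
                rcases hbc with h | h
                · exact absurd (h.trans (hD d' hd')) (hF e0 he0F)
                · exact h
              exfalso
              have := held' e0 (by rw [hGF]; exact Finset.mem_insert_self _ _) hd2
              have hle := he0max d' (Finset.mem_union_right _ hd')
              linarith
          · intro e hwe
            rw [hGFD, hGF, hsplit]
            simp only [Finset.mem_insert]
            constructor
            · rintro (rfl | he)
              · exact Or.inl rfl
              · exact Or.inr ((hpre e hwe).mp he)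
            · rintro (rfl | he)
              · exact Or.inl rfl
              · exact Or.inr ((hpre e hwe).mpr he)
      · -- the max edge lies in D
        right
        have hD1empty : D.filter (fun f => ¬ bconf e0 f) = ∅ := by
          apply Finset.filter_eq_empty_iff.mpr
          intro d hd
          simp only [not_not]
          exact Or.inl ((hD e0 he0D).trans (hD d hd).symm)
        have hsplit : (F ∪ D).filter (fun f => ¬ bconf e0 f) =
            F.filter (fun f => ¬ bconf e0 f) := by
          rw [Finset.filter_union, hD1empty, Finset.union_empty]
        refine ⟨e0, he0D, ?_, ?_, ?_, ?_⟩
        · rw [hGFD]; exact Finset.mem_insert_self _ _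
        · intro f hf _
          have hfF : f ∈ F := greedyAux_subset w bconf (n+1) F hf
          have hne : f ≠ e0 := by
            rintro rfl
            exact hF _ hfF (hD _ he0D)
          have hle : w f ≤ w e0 := he0max f (Finset.mem_union_left _ hfF)
          rcases lt_or_eq_of_le hle with h | h
          · exact h
          · exact absurd (hinj (Finset.mem_coe.mpr (Finset.mem_union_left _ hfF))
              (Finset.mem_coe.mpr he0mem) h) hne
        · intro d' hd' _
          exact he0max d' (Finset.mem_union_right _ hd')
        · intro e hwe
          constructor
          · intro he
            exfalso
            rw [hGFD] at he
            rcases Finset.mem_insert.mp he with rfl | he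
            · exact lt_irrefl _ hwe
            · have := greedyAux_subset w bconf n _ he
              have := Finset.filter_subset _ _ this
              have := he0max e this
              linarith
          · intro he
            exfalso
            have := greedyAux_subset w bconf (n+1) F he
            have := he0max e (Finset.mem_union_left _ this)
            linarith
    · -- F ∪ D empty
      left
      have hU : F ∪ D = ∅ := Finset.not_nonempty_iff_eq_empty.mp hFD
      have hDe : D = ∅ := Finset.union_eq_empty.mp hU |>.2
      rw [hU, hDe, Finset.union_eq_empty.mp hU |>.1]
      exact ⟨rfl, by simp⟩

end Core

section Cand

variable {L R : Type*} [DecidableEq L] [DecidableEq R] {E : Finset (L × R)} {w : L × R → ℝ}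

lemma subL_subset (E : Finset (L × R)) (U : Finset L) : subL E U ⊆ E :=
  Finset.filter_subset _ _

lemma mem_subL {U : Finset L} {e : L × R} : e ∈ subL E U ↔ e ∈ E ∧ e.1 ∈ U :=
  Finset.mem_filter

lemma subL_insert (v : L) (U : Finset L) :
    subL E (insert v U) = subL E U ∪ E.filter (fun e => e.1 = v) := by
  ext e
  simp only [mem_subL, Finset.mem_union, Finset.mem_filter, Finset.mem_insert]
  tauto

lemma greedy_subL_mem {U : Finset L} {e : L × R}
    (he : e ∈ greedy w bconf (subL E U)) : e ∈ E ∧ e.1 ∈ U :=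
  mem_subL.mp (greedy_subset w _ he)

lemma matching_right {M : Finset (L × R)} (hM : isMatching bconf M) {e f : L × R}
    (he : e ∈ M) (hf : f ∈ M) (h : e.2 = f.2) : e = f := by
  by_contra hne
  exact hM e he f hf hne (Or.inr h)

lemma matching_left {M : Finset (L × R)} (hM : isMatching bconf M) {e f : L × R}
    (he : e ∈ M) (hf : f ∈ M) (h : e.1 = f.1) : e = f := by
  by_contra hne
  exact hM e he f hf hne (Or.inl h)

/-- Core lemma at the level of induced subgraphs. -/
theorem coreG (hwinj : Set.InjOn w ↑E) (T : Finset L) (v : L) (hv : v ∉ T) :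
    (greedy w bconf (subL E (insert v T)) = greedy w bconf (subL E T) ∧
      ∀ d ∈ E.filter (fun e => e.1 = v), ¬ elig w (greedy w bconf (subL E T)) d) ∨
    (∃ d ∈ E.filter (fun e => e.1 = v),
      d ∈ greedy w bconf (subL E (insert v T)) ∧
      elig w (greedy w bconf (subL E T)) d ∧
      (∀ d' ∈ E.filter (fun e => e.1 = v),
        elig w (greedy w bconf (subL E T)) d' → w d' ≤ w d) ∧
      (∀ e, w d < w e →
        (e ∈ greedy w bconf (subL E (insert v T)) ↔ e ∈ greedy w bconf (subL E T)))) := by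
  set F := subL E T with hF
  set D := E.filter (fun e => e.1 = v) with hDdef
  have hunion : subL E (insert v T) = F ∪ D := subL_insert v T
  have hD : ∀ d ∈ D, d.1 = v := fun d hd => (Finset.mem_filter.mp hd).2
  have hFv : ∀ f ∈ F, f.1 ≠ v := by
    intro f hf
    have := (mem_subL.mp hf).2
    rintro rfl; exact hv this
  have hsub : F ∪ D ⊆ E := by
    rw [← hunion]; exact subL_subset _ _
  have hinj : Set.InjOn w ↑(F ∪ D) := hwinj.mono (by exact_mod_cast hsub)
  set n := F.card + D.card with hn
  have h1 : greedy w bconf (F ∪ D) = greedyAux w bconf n (F ∪ D) :=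
    greedy_eq_aux w n _ (le_trans (Finset.card_union_le _ _) le_rfl)
  have h2 : greedy w bconf F = greedyAux w bconf n F :=
    greedy_eq_aux w n _ (Nat.le_add_right _ _)
  rcases core w n F D v hD hFv hinj le_rfl with ⟨heq, hnel⟩ | ⟨d, hdD, hdm, hdel, hdmax, hpre⟩
  · left
    rw [hunion, h1, h2, heq]
    exact ⟨rfl, hnel⟩
  · right
    refine ⟨d, hdD, ?_, ?_, ?_, ?_⟩
    · rw [hunion, h1]; exact hdm
    · rw [h2]; exact hdel
    · intro d' hd' hel; exact hdmax d' hd' (by rw [← h2]; exact hel)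
    · intro e hwe; rw [hunion, h1, h2]; exact hpre e hwe

/-- Properties of the candidate edge of `v` relative to sample `T`. -/
theorem cand_spec (hwinj : Set.InjOn w ↑E) (T : Finset L) (v : L) (hv : v ∉ T) {e : L × R} (he1 : e.1 = v)
    (he : e ∈ greedy w bconf (subL E (insert v T))) :
    elig w (greedy w bconf (subL E T)) e ∧
    (∀ e' ∈ E, e'.1 = v → elig w (greedy w bconf (subL E T)) e' → w e' ≤ w e) ∧
    (∀ f, w e < w f →
      (f ∈ greedy w bconf (subL E (insert v T)) ↔ f ∈ greedy w bconf (subL E T))) := by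
  rcases coreG hwinj T v hv with ⟨heq, _⟩ | ⟨d, hdD, hdm, hdel, hdmax, hpre⟩
  · exfalso
    rw [heq] at he
    have := (greedy_subL_mem he).2
    rw [he1] at this
    exact hv this
  · have hed : e = d := by
      apply matching_left (greedy_matching w _) he hdm
      rw [he1, (Finset.mem_filter.mp hdD).2]
    subst hed
    exact ⟨hdel, fun e' he' h1 h2 => hdmax e' (Finset.mem_filter.mpr ⟨he', h1⟩) h2, hpre⟩

/-- Existence of a candidate when an eligible edge exists. -/
theorem cand_exists (hwinj : Set.InjOn w ↑E) (T : Finset L) (v : L) (hv : v ∉ T) {e' : L × R} (h1 : e' ∈ E)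
    (h2 : e'.1 = v) (h3 : elig w (greedy w bconf (subL E T)) e') :
    ∃ e ∈ greedy w bconf (subL E (insert v T)), e.1 = v := by
  rcases coreG hwinj T v hv with ⟨_, hnel⟩ | ⟨d, hdD, hdm, _, _, _⟩
  · exact absurd h3 (hnel e' (Finset.mem_filter.mpr ⟨h1, h2⟩))
  · exact ⟨d, hdm, (Finset.mem_filter.mp hdD).2⟩

lemma elig_transfer {M M' : Finset (L × R)} {t : ℝ}
    (hpre : ∀ f, t < w f → (f ∈ M' ↔ f ∈ M)) {e : L × R} (hte : t < w e) :
    elig w M' e ↔ elig w M e := by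
  constructor
  · intro h f hf hf2
    by_contra hc
    push_neg at hc
    have hf' : f ∈ M' := (hpre f (lt_of_lt_of_le hte hc)).mpr hf
    exact absurd (h f hf' hf2) (not_lt.mpr hc)
  · intro h f hf hf2
    by_contra hc
    push_neg at hc
    have hf' : f ∈ M := (hpre f (lt_of_lt_of_le hte hc)).mp hf
    exact absurd (h f hf' hf2) (not_lt.mpr hc)

end Cand

section KLem

variable {L R : Type*} [DecidableEq L] [DecidableEq R] {E : Finset (L × R)} {w : L × R → ℝ}

theorem K2b1 (hwinj : Set.InjOn w ↑E) {A : Finset L} {r : R} {u z : L}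
    (hum : (u, r) ∈ greedy w bconf (subL E (insert u A)))
    (hz : z ∉ insert u A)
    (hzm : (z, r) ∈ greedy w bconf (subL E (insert z (insert u A)))) :
    w (u, r) < w (z, r) :=
  (cand_spec hwinj (insert u A) z hz rfl hzm).1 (u, r) hum rfl

theorem K2a (hwinj : Set.InjOn w ↑E) {A : Finset L} {r : R} {u v : L}
    (hu : u ∉ A) (hv : v ∉ A)
    (hum : (u, r) ∈ greedy w bconf (subL E (insert u A)))
    (hvm : (v, r) ∈ greedy w bconf (subL E (insert v A)))
    (hlt : w (u, r) < w (v, r)) :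
    (v, r) ∈ greedy w bconf (subL E (insert v (insert u A))) := by
  have hne : v ≠ u := by rintro rfl; exact lt_irrefl _ hlt
  have hvA' : v ∉ insert u A := by
    simp only [Finset.mem_insert]
    push_neg
    exact ⟨hne, hv⟩
  have specU := cand_spec hwinj A u hu rfl hum
  have hpre := specU.2.2
  have hel : elig w (greedy w bconf (subL E (insert u A))) (v, r) := by
    intro f hf hf2
    have hfu : f = (u, r) := matching_right (greedy_matching w _) hf hum hf2
    rw [hfu]; exact hlt
  have hvrE : (v, r) ∈ E := (greedy_subL_mem hvm).1
  obtain ⟨e, hem, he1⟩ := cand_exists hwinj (insert u A) v hvA' hvrE rfl hel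
  have specV' := cand_spec hwinj (insert u A) v hvA' he1 hem
  have hge : w (v, r) ≤ w e := specV'.2.1 (v, r) hvrE rfl hel
  have heE : e ∈ E := (greedy_subL_mem hem).1
  rcases eq_or_lt_of_le hge with heq | hlt2
  · have : (v, r) = e := hwinj (Finset.mem_coe.mpr hvrE) (Finset.mem_coe.mpr heE) heq
    rwa [this]
  · exfalso
    have heligA : elig w (greedy w bconf (subL E A)) e :=
      (elig_transfer hpre (lt_trans hlt hlt2)).mp specV'.1
    have specV := cand_spec hwinj A v hv rfl hvm
    have : w e ≤ w (v, r) := specV.2.1 e heE he1 heligA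
    linarith

theorem K2b2 (hwinj : Set.InjOn w ↑E) {A : Finset L} {r : R} {u z : L}
    (hu : u ∉ A)
    (hum : (u, r) ∈ greedy w bconf (subL E (insert u A)))
    (hz : z ∉ insert u A)
    (hzm : (z, r) ∈ greedy w bconf (subL E (insert z (insert u A)))) :
    (z, r) ∈ greedy w bconf (subL E (insert z A)) := by
  have hzu : w (u, r) < w (z, r) := K2b1 hwinj hum hz hzm
  have hzA : z ∉ A := fun h => hz (Finset.mem_insert_of_mem h)
  have specU := cand_spec hwinj A u hu rfl hum
  have hpre := specU.2.2
  have hzrE : (z, r) ∈ E := (greedy_subL_mem hzm).1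
  have heligA : elig w (greedy w bconf (subL E A)) (z, r) := by
    intro f hf hf2
    by_contra hc
    push_neg at hc
    have hfE : f ∈ E := (greedy_subL_mem hf).1
    have hne : f ≠ (z, r) := by
      rintro rfl
      exact hzA (greedy_subL_mem hf).2
    have hflt : w (z, r) < w f := by
      rcases eq_or_lt_of_le hc with h | h
      · exact absurd (hwinj (Finset.mem_coe.mpr hfE) (Finset.mem_coe.mpr hzrE) h.symm) hne
      · exact h
    have hf' : f ∈ greedy w bconf (subL E (insert u A)) :=
      (hpre f (lt_trans hzu hflt)).mpr hf
    have hfu : f = (u, r) := matching_right (greedy_matching w _) hf' hum hf2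
    rw [hfu] at hflt
    linarith
  obtain ⟨e, hem, he1⟩ := cand_exists hwinj A z hzA hzrE rfl heligA
  have spec' := cand_spec hwinj A z hzA he1 hem
  have hge : w (z, r) ≤ w e := spec'.2.1 (z, r) hzrE rfl heligA
  have heE : e ∈ E := (greedy_subL_mem hem).1
  rcases eq_or_lt_of_le hge with heq | hlt2
  · have : (z, r) = e := hwinj (Finset.mem_coe.mpr hzrE) (Finset.mem_coe.mpr heE) heq
    rwa [this]
  · exfalso
    have helig' : elig w (greedy w bconf (subL E (insert u A))) e :=
      (elig_transfer hpre (lt_trans hzu hlt2)).mpr spec'.1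
    have spec2 := cand_spec hwinj (insert u A) z hz rfl hzm
    have : w e ≤ w (z, r) := spec2.2.1 e heE he1 helig'
    linarith

end KLem

section PerR

variable {L R : Type*} [DecidableEq L] [DecidableEq R]

/-- The set of online vertices whose candidate edge points at right vertex `r`. -/
noncomputable def Cr (E : Finset (L × R)) (w : L × R → ℝ) (S A : Finset L) (r : R) :
    Finset L :=
  (S \ A).filter (fun v => (v, r) ∈ greedy w bconf (subL E (insert v A)))

/-- Minimum candidate weight at `r` (0 if there is no candidate). -/
noncomputable def minw (E : Finset (L × R)) (w : L × R → ℝ) (S A : Finset L) (r : R) : ℝ :=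
  if h : (Cr E w S A r).Nonempty then
    w (((Cr E w S A r).exists_min_image (fun v => w (v, r)) h).choose, r)
  else 0

variable {E : Finset (L × R)} {w : L × R → ℝ}

lemma Cr_mem {S A : Finset L} {r : R} {v : L} (hv : v ∈ Cr E w S A r) :
    v ∈ S ∧ v ∉ A ∧ (v, r) ∈ greedy w bconf (subL E (insert v A)) := by
  rcases Finset.mem_filter.mp hv with ⟨h1, h2⟩
  rcases Finset.mem_sdiff.mp h1 with ⟨h3, h4⟩
  exact ⟨h3, h4, h2⟩

lemma Cr_mem_E {S A : Finset L} {r : R} {v : L} (hv : v ∈ Cr E w S A r) :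
    (v, r) ∈ E :=
  (greedy_subL_mem (Cr_mem hv).2.2).1

lemma Cr_w_inj (hwinj : Set.InjOn w ↑E) {S A B : Finset L} {r : R} {v z : L}
    (hv : v ∈ Cr E w S A r) (hz : z ∈ Cr E w S B r) (h : w (v, r) = w (z, r)) :
    v = z := by
  have := hwinj (Finset.mem_coe.mpr (Cr_mem_E hv)) (Finset.mem_coe.mpr (Cr_mem_E hz)) h
  exact congrArg Prod.fst this

lemma minw_le (hwinj : Set.InjOn w ↑E) {S A : Finset L} {r : R} {v : L}
    (hv : v ∈ Cr E w S A r) : minw E w S A r ≤ w (v, r) := by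
  rw [minw, dif_pos ⟨v, hv⟩]
  exact ((Cr E w S A r).exists_min_image (fun v => w (v, r)) ⟨v, hv⟩).choose_spec.2 v hv

lemma minw_nonneg (hw0 : ∀ e ∈ E, 0 ≤ w e) (S A : Finset L) (r : R) :
    0 ≤ minw E w S A r := by
  rw [minw]
  split_ifs with h
  · exact hw0 _ (Cr_mem_E (((Cr E w S A r).exists_min_image (fun v => w (v, r)) h).choose_spec.1))
  · exact le_refl 0

/-- Sum of the minimal-weight part equals `minw`. -/
lemma sum_MP (hwinj : Set.InjOn w ↑E) (S A : Finset L) (r : R) :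
    ∑ v ∈ (Cr E w S A r).filter
        (fun v => ∀ u ∈ Cr E w S A r, w (v, r) ≤ w (u, r)), w (v, r) =
      minw E w S A r := by
  by_cases h : (Cr E w S A r).Nonempty
  · set v0 := ((Cr E w S A r).exists_min_image (fun v => w (v, r)) h).choose with hv0
    have hv0mem : v0 ∈ Cr E w S A r :=
      ((Cr E w S A r).exists_min_image (fun v => w (v, r)) h).choose_spec.1
    have hv0min : ∀ u ∈ Cr E w S A r, w (v0, r) ≤ w (u, r) :=
      ((Cr E w S A r).exists_min_image (fun v => w (v, r)) h).choose_spec.2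
    have hset : (Cr E w S A r).filter
        (fun v => ∀ u ∈ Cr E w S A r, w (v, r) ≤ w (u, r)) = {v0} := by
      ext z
      simp only [Finset.mem_filter, Finset.mem_singleton]
      constructor
      · rintro ⟨hz, hmin⟩
        exact Cr_w_inj hwinj hz hv0mem
          (le_antisymm (hmin v0 hv0mem) (hv0min z hz))
      · rintro rfl
        exact ⟨hv0mem, hv0min⟩
    rw [hset, Finset.sum_singleton, minw, dif_pos h]
  · rw [Finset.not_nonempty_iff_eq_empty] at h
    rw [minw, dif_neg (by rw [h]; exact Finset.not_nonempty_empty)]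
    rw [h]
    simp

/-- Per-right-vertex charging inequality. -/
theorem perR (hw0 : ∀ e ∈ E, 0 ≤ w e) (hwinj : Set.InjOn w ↑E) (S : Finset L) (r : R) :
    ∑ A ∈ S.powerset, ∑ v ∈ Cr E w S A r, w (v, r) ≤
      2 * ∑ A ∈ S.powerset, minw E w S A r := by
  classical
  -- split each inner sum into minimal part and non-minimal part
  have hsplit : ∀ A ∈ S.powerset,
      ∑ v ∈ Cr E w S A r, w (v, r) =
        minw E w S A r +
        ∑ v ∈ (Cr E w S A r).filter
          (fun v => ¬ ∀ u ∈ Cr E w S A r, w (v, r) ≤ w (u, r)), w (v, r) := by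
    intro A _
    rw [← sum_MP hwinj S A r]
    exact (Finset.sum_filter_add_sum_filter_not _ _ _).symm
  rw [Finset.sum_congr rfl hsplit, Finset.sum_add_distrib, two_mul]
  have key : ∑ A ∈ S.powerset,
      ∑ v ∈ (Cr E w S A r).filter
        (fun v => ¬ ∀ u ∈ Cr E w S A r, w (v, r) ≤ w (u, r)), w (v, r) ≤
      ∑ A ∈ S.powerset, minw E w S A r := by
    -- package as sums over sigma types
    have lhs_eq : ∑ A ∈ S.powerset,
        ∑ v ∈ (Cr E w S A r).filter
          (fun v => ¬ ∀ u ∈ Cr E w S A r, w (v, r) ≤ w (u, r)), w (v, r) =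
        ∑ x ∈ S.powerset.sigma (fun A => (Cr E w S A r).filter
          (fun v => ¬ ∀ u ∈ Cr E w S A r, w (v, r) ≤ w (u, r))),
          w (x.2, r) := Finset.sum_sigma' _ _ _
    have rhs_eq : ∑ A ∈ S.powerset, minw E w S A r =
        ∑ x ∈ S.powerset.sigma (fun A => (Cr E w S A r).filter
          (fun v => ∀ u ∈ Cr E w S A r, w (v, r) ≤ w (u, r))),
          w (x.2, r) := by
      rw [Finset.sum_sigma]
      exact Finset.sum_congr rfl (fun A hA => (sum_MP hwinj S A r).symm)
    rw [lhs_eq, rhs_eq]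
    set Lam := S.powerset.sigma (fun A => (Cr E w S A r).filter
      (fun v => ¬ ∀ u ∈ Cr E w S A r, w (v, r) ≤ w (u, r))) with hLam
    set Gam := S.powerset.sigma (fun A => (Cr E w S A r).filter
      (fun v => ∀ u ∈ Cr E w S A r, w (v, r) ≤ w (u, r))) with hGam
    -- the predecessor map
    have hPSne : ∀ x ∈ Lam, ((Cr E w S x.1 r).filter
        (fun u => w (u, r) < w (x.2, r))).Nonempty := by
      rintro ⟨A, v⟩ hx
      rcases Finset.mem_sigma.mp hx with ⟨hA, hv⟩
      rcases Finset.mem_filter.mp hv with ⟨hvC, hnmin⟩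
      push_neg at hnmin
      obtain ⟨u, huC, hu⟩ := hnmin
      exact ⟨u, Finset.mem_filter.mpr ⟨huC, hu⟩⟩
    classical
    set pred : (Σ _ : Finset L, L) → L := fun x =>
      if h : ((Cr E w S x.1 r).filter (fun u => w (u, r) < w (x.2, r))).Nonempty then
        (((Cr E w S x.1 r).filter (fun u => w (u, r) < w (x.2, r))).exists_max_image
          (fun u => w (u, r)) h).choose
      else x.2 with hpred
    have predspec : ∀ x ∈ Lam, pred x ∈ Cr E w S x.1 r ∧
        w (pred x, r) < w (x.2, r) ∧
        ∀ u ∈ Cr E w S x.1 r, w (u, r) < w (x.2, r) → w (u, r) ≤ w (pred x, r) := by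
      intro x hx
      have h := hPSne x hx
      simp only [hpred, dif_pos h]
      set PS := (Cr E w S x.1 r).filter (fun u => w (u, r) < w (x.2, r))
      have h1 := (PS.exists_max_image (fun u => w (u, r)) h).choose_spec.1
      have h2 := (PS.exists_max_image (fun u => w (u, r)) h).choose_spec.2
      rcases Finset.mem_filter.mp h1 with ⟨h3, h4⟩
      exact ⟨h3, h4, fun u hu hlt => h2 u (Finset.mem_filter.mpr ⟨hu, hlt⟩)⟩
    set Phi : (Σ _ : Finset L, L) → (Σ _ : Finset L, L) := fun x =>
      ⟨insert (pred x) x.1, x.2⟩ with hPhi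
    have hmaps : ∀ x ∈ Lam, Phi x ∈ Gam := by
      rintro ⟨A, v⟩ hx
      obtain ⟨hpC, hplt, hpmax⟩ := predspec ⟨A, v⟩ hx
      rcases Finset.mem_sigma.mp hx with ⟨hA, hv⟩
      rcases Finset.mem_filter.mp hv with ⟨hvC, _⟩
      obtain ⟨hvS, hvA, hvm⟩ := Cr_mem hvC
      obtain ⟨hpS, hpA, hpm⟩ := Cr_mem hpC
      set u := pred ⟨A, v⟩ with hu
      -- v is a candidate at r after inserting u
      have hvm' : (v, r) ∈ greedy w bconf (subL E (insert v (insert u A))) :=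
        K2a hwinj hpA hvA hpm hvm hplt
      have hvu : v ≠ u := by
        intro h; rw [h] at hplt; exact lt_irrefl _ hplt
      have hvnotin : v ∉ insert u A := by
        simp only [Finset.mem_insert]
        push_neg
        exact ⟨hvu, hvA⟩
      have hvC' : v ∈ Cr E w S (insert u A) r := by
        refine Finset.mem_filter.mpr ⟨Finset.mem_sdiff.mpr ⟨hvS, hvnotin⟩, hvm'⟩
      apply Finset.mem_sigma.mpr
      constructor
      · exact Finset.mem_powerset.mpr (Finset.insert_subset hpS (Finset.mem_powerset.mp hA))
      · refine Finset.mem_filter.mpr ⟨hvC', ?_⟩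
        intro z hzC'
        by_contra hcon
        push_neg at hcon
        obtain ⟨hzS, hzA', hzm'⟩ := Cr_mem hzC'
        have hzne : z ≠ v := by
          rintro rfl; exact lt_irrefl _ hcon
        have hzCA : z ∈ Cr E w S A r := by
          have : (z, r) ∈ greedy w bconf (subL E (insert z A)) :=
            K2b2 hwinj hpA hpm hzA' hzm'
          refine Finset.mem_filter.mpr ⟨Finset.mem_sdiff.mpr ⟨hzS, ?_⟩, this⟩
          intro hzA
          exact hzA' (Finset.mem_insert_of_mem hzA)
        have hzu : w (u, r) < w (z, r) := K2b1 hwinj hpm hzA' hzm'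
        have := hpmax z hzCA hcon
        linarith
    have hinjOn : ∀ x ∈ Lam, ∀ y ∈ Lam, Phi x = Phi y → x = y := by
      rintro ⟨A1, v1⟩ hx1 ⟨A2, v2⟩ hx2 heq
      obtain ⟨hpC1, _, _⟩ := predspec ⟨A1, v1⟩ hx1
      obtain ⟨hpC2, _, _⟩ := predspec ⟨A2, v2⟩ hx2
      simp only [hPhi, Sigma.mk.inj_iff] at heq
      obtain ⟨hins, hv12⟩ := heq
      have hv : v1 = v2 := eq_of_heq hv12
      obtain ⟨_, hpA1, hpm1⟩ := Cr_mem hpC1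
      obtain ⟨_, hpA2, hpm2⟩ := Cr_mem hpC2
      set u1 := pred ⟨A1, v1⟩
      set u2 := pred ⟨A2, v2⟩
      have hm1 : (u1, r) ∈ greedy w bconf (subL E (insert u1 A1)) := hpm1
      have hm2 : (u2, r) ∈ greedy w bconf (subL E (insert u1 A1)) := by
        rw [hins]; exact hpm2
      have hu12 : (u1, r) = (u2, r) :=
        matching_right (greedy_matching w _) hm1 hm2 rfl
      have huu : u1 = u2 := congrArg Prod.fst hu12
      have hA : A1 = A2 := by
        have e1 : A1 = (insert u1 A1).erase u1 := (Finset.erase_insert hpA1).symm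
        have e2 : A2 = (insert u2 A2).erase u2 := (Finset.erase_insert hpA2).symm
        rw [e1, e2, ← hins, huu]
      subst hv; subst hA; rfl
    calc ∑ x ∈ Lam, w (x.2, r) = ∑ y ∈ Lam.image Phi, w (y.2, r) := by
          rw [Finset.sum_image hinjOn]
      _ ≤ ∑ y ∈ Gam, w (y.2, r) := by
          apply Finset.sum_le_sum_of_subset_of_nonneg
          · intro y hy
            obtain ⟨x, hx, rfl⟩ := Finset.mem_image.mp hy
            exact hmaps x hx
          · intro y hy _
            rcases Finset.mem_sigma.mp hy with ⟨_, hy2⟩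
            exact hw0 _ (Cr_mem_E (Finset.mem_filter.mp hy2).1)
  linarith

end PerR

section RunB

variable {L R : Type*} [DecidableEq L] [DecidableEq R] {E : Finset (L × R)} {w : L × R → ℝ}

lemma stepB_mono (A : Finset L) (M : Finset (L × R)) (u : L) :
    M ⊆ stepB E w A M u := Finset.subset_union_left

lemma foldl_stepB_mono (A : Finset L) :
    ∀ (l : List L) (M : Finset (L × R)), M ⊆ l.foldl (stepB E w A) M := by
  intro l
  induction l with
  | nil => intro M; exact subset_rfl
  | cons u l ih =>
    intro M
    exact (stepB_mono A M u).trans (ih (stepB E w A M u))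

/-- Invariant of the algorithm's partial matching. -/
def runInv (E : Finset (L × R)) (w : L × R → ℝ) (A O : Finset L)
    (M : Finset (L × R)) : Prop :=
  (∀ e ∈ M, e.1 ∈ O ∧ e ∈ greedy w bconf (subL E (insert e.1 A))) ∧
  (∀ e ∈ M, ∀ f ∈ M, e ≠ f → e.2 ≠ f.2)

lemma stepB_inv {A O : Finset L} {M : Finset (L × R)} {u : L} (hu : u ∈ O)
    (hM : runInv E w A O M) : runInv E w A O (stepB E w A M u) := by
  obtain ⟨h1, h2⟩ := hM
  constructor
  · intro e he
    rcases Finset.mem_union.mp he with he | he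
    · exact h1 e he
    · rcases Finset.mem_filter.mp he with ⟨hge, he1, _⟩
      rw [he1]
      exact ⟨hu, hge⟩
  · intro e he f hf hne
    rcases Finset.mem_union.mp he with he | he <;>
      rcases Finset.mem_union.mp hf with hf | hf
    · exact h2 e he f hf hne
    · rcases Finset.mem_filter.mp hf with ⟨_, _, hf3⟩
      exact fun h => hf3 e he h
    · rcases Finset.mem_filter.mp he with ⟨_, _, he3⟩
      exact fun h => he3 f hf h.symm
    · exfalso
      rcases Finset.mem_filter.mp he with ⟨hge, he1, _⟩
      rcases Finset.mem_filter.mp hf with ⟨hgf, hf1, _⟩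
      exact hne (matching_left (greedy_matching w _) hge hgf (he1.trans hf1.symm))

lemma foldl_stepB_inv {A O : Finset L} :
    ∀ (l : List L) (M : Finset (L × R)), (∀ u ∈ l, u ∈ O) →
      runInv E w A O M → runInv E w A O (l.foldl (stepB E w A) M) := by
  intro l
  induction l with
  | nil => intro M _ hM; exact hM
  | cons u l ih =>
    intro M hl hM
    exact ih _ (fun x hx => hl x (List.mem_cons_of_mem _ hx))
      (stepB_inv (hl u (List.mem_cons_self)) hM)

lemma foldl_stepB_reaches {S A : Finset L} {r : R} :
    ∀ (l : List L) (M : Finset (L × R)),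
      ((∃ u ∈ l, u ∈ Cr E w S A r) ∨ ∃ e ∈ M, e.2 = r) →
      ∃ e ∈ l.foldl (stepB E w A) M, e.2 = r := by
  intro l
  induction l with
  | nil =>
    intro M h
    rcases h with ⟨u, hu, _⟩ | h
    · exact absurd hu List.not_mem_nil
    · exact h
  | cons u l ih =>
    intro M h
    by_cases hMr : ∃ e ∈ M, e.2 = r
    · apply ih
      right
      obtain ⟨e, he, he2⟩ := hMr
      exact ⟨e, stepB_mono A M u he, he2⟩
    · rcases h with ⟨u', hu', hC⟩ | h
      · rcases List.mem_cons.mp hu' with rfl | hu'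
        · -- u' = u arrives now; its candidate at r is added
          apply ih
          right
          refine ⟨(u', r), ?_, rfl⟩
          apply Finset.mem_union_right
          apply Finset.mem_filter.mpr
          refine ⟨(Cr_mem hC).2.2, rfl, ?_⟩
          intro f hf
          intro hf2
          exact hMr ⟨f, hf, hf2⟩
        · exact ih _ (Or.inl ⟨u', hu', hC⟩)
      · exact absurd h hMr
  
theorem runB_ge (hw0 : ∀ e ∈ E, 0 ≤ w e) (hwinj : Set.InjOn w ↑E)
    (S O : Finset L) (hOS : O ⊆ S) (ord : List L) (hord : ord.toFinset = O) :
    ∑ r ∈ E.image Prod.snd, minw E w S (S \ O) r ≤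
      ∑ e ∈ runB E w (S \ O) ord, w e := by
  classical
  set A := S \ O with hA
  have hSA : S \ A = O := by
    ext x
    have hx := @hOS x
    simp only [hA, Finset.mem_sdiff, not_and, not_not]
    constructor
    · rintro ⟨h1, h2⟩; exact h2 h1
    · intro h; exact ⟨hx h, fun _ => h⟩
  set M := runB E w A ord with hM
  have hinv : runInv E w A O M := by
    apply foldl_stepB_inv ord ∅
    · intro u hu
      rw [← hord]
      exact List.mem_toFinset.mpr hu
    · constructor
      · intro e he; simp at he
      · intro e he; simp at he
  have hMw : ∀ e ∈ M, 0 ≤ w e := by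
    intro e he
    exact hw0 e (greedy_subL_mem (hinv.1 e he).2).1
  -- restrict to right vertices receiving a candidate
  set T := (E.image Prod.snd).filter (fun r => (Cr E w S A r).Nonempty) with hT
  have hzero : ∑ r ∈ E.image Prod.snd, minw E w S A r = ∑ r ∈ T, minw E w S A r := by
    rw [← Finset.sum_filter_add_sum_filter_not (E.image Prod.snd)
      (fun r => (Cr E w S A r).Nonempty) (fun r => minw E w S A r)]
    have : ∑ r ∈ (E.image Prod.snd).filter
        (fun r => ¬ (Cr E w S A r).Nonempty), minw E w S A r = 0 := by
      apply Finset.sum_eq_zero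
      intro r hr
      rw [minw, dif_neg (Finset.mem_filter.mp hr).2]
    rw [this, add_zero]
  rw [hzero]
  -- each r in T is matched in M
  have hreach : ∀ r ∈ T, ∃ e ∈ M, e.2 = r := by
    intro r hr
    obtain ⟨hr1, hne⟩ := Finset.mem_filter.mp hr
    obtain ⟨v, hv⟩ := hne
    apply foldl_stepB_reaches ord ∅
    left
    refine ⟨v, ?_, hv⟩
    rw [← List.mem_toFinset, hord, ← hSA]
    exact (Finset.mem_sdiff.mpr ⟨(Cr_mem hv).1, (Cr_mem hv).2.1⟩)
  set M' := M.filter (fun e => e.2 ∈ T) with hM'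
  have hbij : ∑ e ∈ M', minw E w S A e.2 = ∑ r ∈ T, minw E w S A r := by
    apply Finset.sum_bij (fun e _ => e.2)
    · intro e he; exact (Finset.mem_filter.mp he).2
    · intro e1 he1 e2 he2 h
      by_contra hne
      exact hinv.2 e1 (Finset.mem_filter.mp he1).1 e2 (Finset.mem_filter.mp he2).1 hne h
    · intro r hr
      obtain ⟨e, he, he2⟩ := hreach r hr
      refine ⟨e, Finset.mem_filter.mpr ⟨he, ?_⟩, he2⟩
      rw [he2]; exact hr
    · intro e he; rfl
  rw [← hbij]
  have hle1 : ∑ e ∈ M', minw E w S A e.2 ≤ ∑ e ∈ M', w e := by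
    apply Finset.sum_le_sum
    intro e he
    have heM := (Finset.mem_filter.mp he).1
    obtain ⟨he1O, hecand⟩ := hinv.1 e heM
    have he1Cr : e.1 ∈ Cr E w S A e.2 := by
      apply Finset.mem_filter.mpr
      constructor
      · rw [hSA]; exact he1O
      · rw [Prod.mk.eta]; exact hecand
    calc minw E w S A e.2 ≤ w (e.1, e.2) := minw_le hwinj he1Cr
      _ = w e := by rw [Prod.mk.eta]
  have hle2 : ∑ e ∈ M', w e ≤ ∑ e ∈ M, w e :=
    Finset.sum_le_sum_of_subset_of_nonneg (Finset.filter_subset _ _)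
      (fun e he _ => hMw e he)
  linarith

end RunB

section Half

variable {L R : Type*} [DecidableEq L] [DecidableEq R] {w : L × R → ℝ}

lemma isMatching_subset {M N : Finset (L × R)} (h : M ⊆ N)
    (hN : isMatching bconf N) : isMatching bconf M :=
  fun e he f hf hne => hN e (h he) f (h hf) hne

lemma half_aux : ∀ (n : ℕ) (F M : Finset (L × R)), F.card ≤ n → M ⊆ F →
    isMatching bconf M → (∀ e ∈ F, 0 ≤ w e) →
    ∑ e ∈ M, w e ≤ 2 * ∑ e ∈ greedyAux w bconf n F, w e := by
  intro n
  induction n with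
  | zero =>
    intro F M hc hMF hM h0
    have : F = ∅ := Finset.card_eq_zero.mp (Nat.le_zero.mp hc)
    subst this
    rw [Finset.subset_empty.mp hMF]
    simp [greedyAux_empty]
  | succ n ih =>
    intro F M hc hMF hM h0
    by_cases hF : F.Nonempty
    · rw [greedyAux_succ w bconf n F hF]
      set e0 := (F.exists_max_image w hF).choose with he0
      have he0F : e0 ∈ F := (F.exists_max_image w hF).choose_spec.1
      have he0max : ∀ x ∈ F, w x ≤ w e0 := (F.exists_max_image w hF).choose_spec.2
      set F1 := F.filter (fun f => ¬ bconf e0 f) with hF1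
      set M1 := M.filter (fun f => ¬ bconf e0 f) with hM1
      set Me := M.filter (fun f => bconf e0 f) with hMe
      have hsum : ∑ e ∈ M1, w e + ∑ e ∈ Me, w e = ∑ e ∈ M, w e := by
        rw [hM1, hMe]
        rw [← Finset.sum_filter_add_sum_filter_not M (fun f => bconf e0 f) w]
        ring
      have hMewt : ∑ e ∈ Me, w e ≤ 2 * w e0 := by
        set Ma := M.filter (fun f => e0.1 = f.1) with hMa
        set Mb := M.filter (fun f => e0.2 = f.2) with hMb
        have hsub : Me ⊆ Ma ∪ Mb := by
          intro f hf
          rcases Finset.mem_filter.mp hf with ⟨hfM, hbc⟩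
          rcases hbc with h | h
          · exact Finset.mem_union_left _ (Finset.mem_filter.mpr ⟨hfM, h⟩)
          · exact Finset.mem_union_right _ (Finset.mem_filter.mpr ⟨hfM, h⟩)
        have hnn : ∀ f ∈ Ma ∪ Mb, 0 ≤ w f := by
          intro f hf
          rcases Finset.mem_union.mp hf with hf | hf <;>
            exact h0 f (hMF (Finset.mem_filter.mp hf).1)
        have h1 : ∑ e ∈ Me, w e ≤ ∑ e ∈ Ma ∪ Mb, w e :=
          Finset.sum_le_sum_of_subset_of_nonneg hsub (fun f hf _ => hnn f hf)
        have hsing : ∀ (s : Finset (L × R)), s ⊆ M →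
            (∀ a ∈ s, ∀ b ∈ s, a = b) → ∑ e ∈ s, w e ≤ w e0 := by
          intro s hsM hs
          rcases Finset.eq_empty_or_nonempty s with h | ⟨a, ha⟩
          · rw [h]; simpa using h0 e0 he0F
          · have : s = {a} := by
              ext b
              simp only [Finset.mem_singleton]
              constructor
              · intro hb; exact hs b hb a ha
              · rintro rfl; exact ha
            rw [this, Finset.sum_singleton]
            exact he0max a (hMF (hsM ha))
        have h2 : ∑ e ∈ Ma, w e ≤ w e0 := by
          apply hsing Ma (Finset.filter_subset _ _)
          intro a ha b hb
          exact matching_left hM (Finset.mem_filter.mp ha).1 (Finset.mem_filter.mp hb).1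
            ((Finset.mem_filter.mp ha).2.symm.trans (Finset.mem_filter.mp hb).2)
        have h3 : ∑ e ∈ Mb, w e ≤ w e0 := by
          apply hsing Mb (Finset.filter_subset _ _)
          intro a ha b hb
          exact matching_right hM (Finset.mem_filter.mp ha).1 (Finset.mem_filter.mp hb).1
            ((Finset.mem_filter.mp ha).2.symm.trans (Finset.mem_filter.mp hb).2)
        have h4 : ∑ e ∈ Ma ∪ Mb, w e ≤ ∑ e ∈ Ma, w e + ∑ e ∈ Mb, w e := by
          have := Finset.sum_union_inter (s₁ := Ma) (s₂ := Mb) (f := w)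
          have hnn2 : 0 ≤ ∑ e ∈ Ma ∩ Mb, w e := by
            apply Finset.sum_nonneg
            intro f hf
            exact h0 f (hMF (Finset.mem_filter.mp (Finset.mem_of_mem_inter_left hf)).1)
          linarith
        linarith
      have hIH : ∑ e ∈ M1, w e ≤ 2 * ∑ e ∈ greedyAux w bconf n F1, w e := by
        apply ih
        · have := card_filter_not_bconf_lt (F := F) (e := e0) he0F
          rw [← hF1] at this
          omega
        · exact Finset.filter_subset_filter _ hMF
        · exact isMatching_subset (Finset.filter_subset _ _) hM
        · exact fun e he => h0 e (Finset.filter_subset _ _ he)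
      have he0notin : e0 ∉ greedyAux w bconf n F1 := by
        intro h
        have := greedyAux_subset w bconf n F1 h
        exact (Finset.mem_filter.mp this).2 (bconf_refl e0)
      rw [Finset.sum_insert he0notin]
      linarith
    · rw [Finset.not_nonempty_iff_eq_empty] at hF
      subst hF
      rw [Finset.subset_empty.mp hMF]
      simp [greedyAux_empty]

end Half

section OptW

variable {L R : Type*} [DecidableEq L] [DecidableEq R] {w : L × R → ℝ}

lemma optWeight_le_twice_greedy (F : Finset (L × R)) (h0 : ∀ e ∈ F, 0 ≤ w e) :
    optWeight w bconf F ≤ 2 * ∑ e ∈ greedy w bconf F, w e := by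
  apply Finset.sup'_le
  intro M hM
  rcases Finset.mem_filter.mp hM with ⟨hMp, hMm⟩
  exact half_aux F.card F M le_rfl (Finset.mem_powerset.mp hMp) hMm h0

end OptW

section PerS

variable {L R : Type*} [DecidableEq L] [DecidableEq R] {E : Finset (L × R)} {w : L × R → ℝ}

/-- Total candidate weight of `v` against sample `A`. -/
noncomputable def candW (E : Finset (L × R)) (w : L × R → ℝ) (A : Finset L) (v : L) : ℝ :=
  ∑ e ∈ (greedy w bconf (subL E (insert v A))).filter (fun e => e.1 = v), w e

lemma sum_Cr_eq_candW (S A : Finset L) :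
    ∑ r ∈ E.image Prod.snd, ∑ v ∈ Cr E w S A r, w (v, r) =
      ∑ v ∈ S \ A, candW E w A v := by
  classical
  have h1 : ∀ r ∈ E.image Prod.snd, ∑ v ∈ Cr E w S A r, w (v, r) =
      ∑ v ∈ S \ A, if (v, r) ∈ greedy w bconf (subL E (insert v A)) then w (v, r) else 0 := by
    intro r _
    rw [Cr, Finset.sum_filter]
  rw [Finset.sum_congr rfl h1, Finset.sum_comm]
  apply Finset.sum_congr rfl
  intro v hv
  rw [← Finset.sum_filter]
  rw [candW]
  apply Finset.sum_bij (fun r _ => (v, r))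
  · intro r hr
    rcases Finset.mem_filter.mp hr with ⟨_, h⟩
    exact Finset.mem_filter.mpr ⟨h, rfl⟩
  · intro r1 _ r2 _ h
    exact congrArg Prod.snd h
  · intro e he
    rcases Finset.mem_filter.mp he with ⟨heg, he1⟩
    have hee : (v, e.2) = e := by rw [← he1]
    refine ⟨e.2, Finset.mem_filter.mpr ⟨?_, ?_⟩, hee⟩
    · exact Finset.mem_image.mpr ⟨e, (greedy_subL_mem heg).1, rfl⟩
    · rw [hee]; exact heg
  · intro r _; rfl

lemma powerset_compl_reindex (S : Finset L) (f : Finset L → ℝ) :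
    ∑ O ∈ S.powerset, f (S \ O) = ∑ A ∈ S.powerset, f A := by
  apply Finset.sum_nbij' (fun O => S \ O) (fun A => S \ A)
  · intro O hO; exact Finset.mem_powerset.mpr (Finset.sdiff_subset)
  · intro A hA; exact Finset.mem_powerset.mpr (Finset.sdiff_subset)
  · intro O hO
    exact Finset.sdiff_sdiff_eq_self (Finset.mem_powerset.mp hO)
  · intro A hA
    exact Finset.sdiff_sdiff_eq_self (Finset.mem_powerset.mp hA)
  · intro O _; rfl

/-- The exchange identity: total candidate weight over random online sets equals
total greedy weight of the online sets. -/
lemma exchange (S : Finset L) :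
    ∑ O ∈ S.powerset, ∑ v ∈ O, candW E w (S \ O) v =
      ∑ O ∈ S.powerset, ∑ e ∈ greedy w bconf (subL E O), w e := by
  classical
  have rhs : ∀ O ∈ S.powerset, ∑ e ∈ greedy w bconf (subL E O), w e =
      ∑ v ∈ O, ∑ e ∈ (greedy w bconf (subL E O)).filter (fun e => e.1 = v), w e := by
    intro O _
    exact (Finset.sum_fiberwise_of_maps_to
      (fun e he => (greedy_subL_mem he).2) w).symm
  rw [Finset.sum_congr rfl rhs]
  rw [Finset.sum_sigma' S.powerset (fun O => O)
    (fun O v => candW E w (S \ O) v)]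
  rw [Finset.sum_sigma' S.powerset (fun O => O)
    (fun O v => ∑ e ∈ (greedy w bconf (subL E O)).filter (fun e => e.1 = v), w e)]
  apply Finset.sum_nbij' (fun x => (⟨insert x.2 (S \ x.1), x.2⟩ : Σ _ : Finset L, L))
    (fun x => (⟨insert x.2 (S \ x.1), x.2⟩ : Σ _ : Finset L, L))
  · rintro ⟨O, v⟩ hx
    rcases Finset.mem_sigma.mp hx with ⟨hO, hv⟩
    apply Finset.mem_sigma.mpr
    refine ⟨Finset.mem_powerset.mpr ?_, Finset.mem_insert_self _ _⟩
    exact Finset.insert_subset (Finset.mem_powerset.mp hO hv) Finset.sdiff_subset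
  · rintro ⟨O, v⟩ hx
    rcases Finset.mem_sigma.mp hx with ⟨hO, hv⟩
    apply Finset.mem_sigma.mpr
    refine ⟨Finset.mem_powerset.mpr ?_, Finset.mem_insert_self _ _⟩
    exact Finset.insert_subset (Finset.mem_powerset.mp hO hv) Finset.sdiff_subset
  · rintro ⟨O, v⟩ hx
    rcases Finset.mem_sigma.mp hx with ⟨hO, hv⟩
    have hOS := Finset.mem_powerset.mp hO
    have key : S \ insert v (S \ O) = O.erase v := by
      ext x
      simp only [Finset.mem_sdiff, Finset.mem_insert, Finset.mem_erase, not_or]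
      constructor
      · rintro ⟨hxS, hxv, hxO⟩
        refine ⟨hxv, ?_⟩
        by_contra h
        exact hxO ⟨hxS, h⟩
      · rintro ⟨hxv, hxO⟩
        exact ⟨hOS hxO, hxv, fun h => h.2 hxO⟩
    have : insert v (S \ insert v (S \ O)) = O := by
      rw [key]
      exact Finset.insert_erase hv
    simp only [this]
  · rintro ⟨O, v⟩ hx
    rcases Finset.mem_sigma.mp hx with ⟨hO, hv⟩
    have hOS := Finset.mem_powerset.mp hO
    have key : S \ insert v (S \ O) = O.erase v := by
      ext x
      simp only [Finset.mem_sdiff, Finset.mem_insert, Finset.mem_erase, not_or]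
      constructor
      · rintro ⟨hxS, hxv, hxO⟩
        refine ⟨hxv, ?_⟩
        by_contra h
        exact hxO ⟨hxS, h⟩
      · rintro ⟨hxv, hxO⟩
        exact ⟨hOS hxO, hxv, fun h => h.2 hxO⟩
    have : insert v (S \ insert v (S \ O)) = O := by
      rw [key]
      exact Finset.insert_erase hv
    simp only [this]
  · rintro ⟨O, v⟩ hx
    rfl

theorem perS (hw0 : ∀ e ∈ E, 0 ≤ w e) (hwinj : Set.InjOn w ↑E) (S : Finset L)
    (ords : Finset L → List L) (hords : ∀ O ∈ S.powerset, (ords O).toFinset = O) :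
    (1 / 4) * ∑ O ∈ S.powerset, optWeight w bconf (subL E O) ≤
      ∑ O ∈ S.powerset, ∑ e ∈ runB E w (S \ O) (ords O), w e := by
  classical
  have step1 : ∑ O ∈ S.powerset, ∑ r ∈ E.image Prod.snd, minw E w S (S \ O) r ≤
      ∑ O ∈ S.powerset, ∑ e ∈ runB E w (S \ O) (ords O), w e := by
    apply Finset.sum_le_sum
    intro O hO
    exact runB_ge hw0 hwinj S O (Finset.mem_powerset.mp hO) (ords O) (hords O hO)
  have step2 : ∑ O ∈ S.powerset, ∑ v ∈ O, candW E w (S \ O) v ≤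
      2 * ∑ O ∈ S.powerset, ∑ r ∈ E.image Prod.snd, minw E w S (S \ O) r := by
    have hL : ∑ O ∈ S.powerset, ∑ v ∈ O, candW E w (S \ O) v =
        ∑ A ∈ S.powerset, ∑ r ∈ E.image Prod.snd, ∑ v ∈ Cr E w S A r, w (v, r) := by
      have h1 : ∀ O ∈ S.powerset, ∑ v ∈ O, candW E w (S \ O) v =
          ∑ r ∈ E.image Prod.snd, ∑ v ∈ Cr E w S (S \ O) r, w (v, r) := by
        intro O hO
        rw [sum_Cr_eq_candW S (S \ O)]
        rw [Finset.sdiff_sdiff_eq_self (Finset.mem_powerset.mp hO)]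
      rw [Finset.sum_congr rfl h1]
      exact powerset_compl_reindex S
        (fun A => ∑ r ∈ E.image Prod.snd, ∑ v ∈ Cr E w S A r, w (v, r))
    have hR : ∑ O ∈ S.powerset, ∑ r ∈ E.image Prod.snd, minw E w S (S \ O) r =
        ∑ A ∈ S.powerset, ∑ r ∈ E.image Prod.snd, minw E w S A r :=
      powerset_compl_reindex S (fun A => ∑ r ∈ E.image Prod.snd, minw E w S A r)
    rw [hL, hR]
    rw [Finset.sum_comm, Finset.sum_comm (s := S.powerset)]
    rw [Finset.mul_sum]
    apply Finset.sum_le_sum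
    intro r _
    exact perR hw0 hwinj S r
  have step3 : ∑ O ∈ S.powerset, optWeight w bconf (subL E O) ≤
      2 * ∑ O ∈ S.powerset, ∑ v ∈ O, candW E w (S \ O) v := by
    rw [exchange, Finset.mul_sum]
    apply Finset.sum_le_sum
    intro O _
    exact optWeight_le_twice_greedy (subL E O)
      (fun e he => hw0 e (subL_subset E O he))
  linarith

end PerS

section Prob

variable {L R : Type*} [Fintype L] [DecidableEq L] [DecidableEq R]

lemma coeff_id {p : ℝ} (hp : p ≠ 0) (a m : ℕ) :
    p ^ (a + m) * (((1 - p) / p) ^ a * (1 - (1 - p) / p) ^ m) =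
      (1 - p) ^ a * (2 * p - 1) ^ m := by
  have h1 : 1 - (1 - p) / p = (2 * p - 1) / p := by
    field_simp
    ring
  rw [h1, div_pow, div_pow, pow_add]
  field_simp

lemma binom_split (x y : ℝ) (T : Finset L) :
    (x + y) ^ T.card = ∑ A ∈ T.powerset, x ^ A.card * y ^ (T.card - A.card) := by
  have := Finset.prod_add (fun _ : L => x) (fun _ : L => y) T
  rw [Finset.prod_const] at this
  rw [this]
  apply Finset.sum_congr rfl
  intro A hA
  rw [Finset.prod_const, Finset.prod_const,
    Finset.card_sdiff_of_subset (Finset.mem_powerset.mp hA)]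

lemma sigma_union_reindex (f : Finset L → Finset L → ℝ) :
    ∑ x ∈ ((Finset.univ : Finset L).powerset).sigma
        (fun O => ((Finset.univ : Finset L) \ O).powerset), f x.1 x.2 =
      ∑ y ∈ ((Finset.univ : Finset L).powerset).sigma (fun S => S.powerset),
        f y.2 (y.1 \ y.2) := by
  apply Finset.sum_nbij' (fun x => (⟨x.1 ∪ x.2, x.1⟩ : Σ _ : Finset L, Finset L))
    (fun y => (⟨y.2, y.1 \ y.2⟩ : Σ _ : Finset L, Finset L))
  · rintro ⟨O, H'⟩ hx
    rcases Finset.mem_sigma.mp hx with ⟨hO, hH⟩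
    exact Finset.mem_sigma.mpr ⟨Finset.mem_powerset.mpr (Finset.subset_univ _),
      Finset.mem_powerset.mpr Finset.subset_union_left⟩
  · rintro ⟨S, O⟩ hy
    rcases Finset.mem_sigma.mp hy with ⟨hS, hO⟩
    apply Finset.mem_sigma.mpr
    refine ⟨Finset.mem_powerset.mpr (Finset.subset_univ _),
      Finset.mem_powerset.mpr ?_⟩
    intro x hx
    rcases Finset.mem_sdiff.mp hx with ⟨h1, h2⟩
    exact Finset.mem_sdiff.mpr ⟨Finset.mem_univ x, h2⟩
  · rintro ⟨O, H'⟩ hx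
    rcases Finset.mem_sigma.mp hx with ⟨hO, hH⟩
    have hdisj : Disjoint O H' := by
      rw [Finset.disjoint_right]
      intro a ha
      exact (Finset.mem_sdiff.mp (Finset.mem_powerset.mp hH ha)).2
    have h2 : (O ∪ H') \ O = H' := Finset.union_sdiff_cancel_left hdisj
    show (⟨O, (O ∪ H') \ O⟩ : Σ _ : Finset L, Finset L) = ⟨O, H'⟩
    rw [h2]
  · rintro ⟨S, O⟩ hy
    rcases Finset.mem_sigma.mp hy with ⟨hS, hO⟩
    have h2 : O ∪ S \ O = S := Finset.union_sdiff_of_subset (Finset.mem_powerset.mp hO)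
    show (⟨O ∪ S \ O, O⟩ : Σ _ : Finset L, Finset L) = ⟨S, O⟩
    rw [h2]
  · rintro ⟨O, H'⟩ hx
    rcases Finset.mem_sigma.mp hx with ⟨hO, hH⟩
    have hdisj : Disjoint O H' := by
      rw [Finset.disjoint_right]
      intro a ha
      exact (Finset.mem_sdiff.mp (Finset.mem_powerset.mp hH ha)).2
    have h2 : (O ∪ H') \ O = H' := Finset.union_sdiff_cancel_left hdisj
    show f O H' = f O ((O ∪ H') \ O)
    rw [h2]

/-- Rewrite a nested expectation over `(H, H' ⊆ H)` as a sum over split worlds `S`. -/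
lemma expSubsets_to_splits {p : ℝ} (hp : p ≠ 0) (G : Finset L → Finset L → ℝ) :
    expSubsets p Finset.univ
        (fun H => expSubsets ((1 - p) / p) H (fun H' => G H' H)) =
      ∑ S ∈ (Finset.univ : Finset L).powerset,
        (1 - p) ^ S.card * (2 * p - 1) ^ ((Finset.univ : Finset L).card - S.card) *
          ∑ O ∈ S.powerset, G (S \ O) (Finset.univ \ O) := by
  classical
  set n := (Finset.univ : Finset L).card with hn
  rw [expSubsets]
  -- push the outer coefficient inside the inner sum
  have h1 : ∀ H ∈ (Finset.univ : Finset L).powerset,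
      p ^ H.card * (1 - p) ^ (n - H.card) *
        expSubsets ((1 - p) / p) H (fun H' => G H' H) =
      ∑ H' ∈ H.powerset,
        (1 - p) ^ ((n - H.card) + H'.card) * (2 * p - 1) ^ (H.card - H'.card) *
          G H' H := by
    intro H hH
    rw [expSubsets, Finset.mul_sum]
    apply Finset.sum_congr rfl
    intro H' hH'
    have hle : H'.card ≤ H.card := Finset.card_le_card (Finset.mem_powerset.mp hH')
    have e1 : H'.card + (H.card - H'.card) = H.card := by omega
    have e2 := coeff_id hp H'.card (H.card - H'.card)
    rw [e1] at e2
    rw [pow_add]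
    calc p ^ H.card * (1 - p) ^ (n - H.card) *
          (((1 - p) / p) ^ H'.card * (1 - (1 - p) / p) ^ (H.card - H'.card) * G H' H)
        = (p ^ H.card * (((1 - p) / p) ^ H'.card *
            (1 - (1 - p) / p) ^ (H.card - H'.card))) *
          ((1 - p) ^ (n - H.card) * G H' H) := by ring
      _ = ((1 - p) ^ H'.card * (2 * p - 1) ^ (H.card - H'.card)) *
          ((1 - p) ^ (n - H.card) * G H' H) := by rw [e2]
      _ = (1 - p) ^ (n - H.card) * (1 - p) ^ H'.card *
          (2 * p - 1) ^ (H.card - H'.card) * G H' H := by ring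
  rw [Finset.sum_congr rfl h1]
  -- complement the outer index
  rw [← powerset_compl_reindex (Finset.univ : Finset L)
    (fun H => ∑ H' ∈ H.powerset,
      (1 - p) ^ ((n - H.card) + H'.card) * (2 * p - 1) ^ (H.card - H'.card) * G H' H)]
  -- rewrite per (O, H') and flatten
  have h2 : ∀ O ∈ (Finset.univ : Finset L).powerset,
      ∑ H' ∈ (Finset.univ \ O).powerset,
        (1 - p) ^ ((n - (Finset.univ \ O).card) + H'.card) *
          (2 * p - 1) ^ ((Finset.univ \ O).card - H'.card) * G H' (Finset.univ \ O) =
      ∑ H' ∈ (Finset.univ \ O).powerset,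
        (1 - p) ^ (O.card + H'.card) * (2 * p - 1) ^ (n - (O.card + H'.card)) *
          G H' (Finset.univ \ O) := by
    intro O hO
    apply Finset.sum_congr rfl
    intro H' hH'
    have hcO : O.card ≤ n := Finset.card_le_card (Finset.subset_univ O)
    have hcs : (Finset.univ \ O).card = n - O.card :=
      Finset.card_sdiff_of_subset (Finset.subset_univ O)
    have hcH : H'.card ≤ (Finset.univ \ O).card :=
      Finset.card_le_card (Finset.mem_powerset.mp hH')
    have e3 : n - (Finset.univ \ O).card + H'.card = O.card + H'.card := by omega
    have e4 : (Finset.univ \ O).card - H'.card = n - (O.card + H'.card) := by omega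
    rw [e3, e4]
  rw [Finset.sum_congr rfl h2]
  rw [Finset.sum_sigma' ((Finset.univ : Finset L).powerset)
    (fun O => ((Finset.univ : Finset L) \ O).powerset)
    (fun O H' => (1 - p) ^ (O.card + H'.card) * (2 * p - 1) ^ (n - (O.card + H'.card)) *
      G H' (Finset.univ \ O))]
  rw [sigma_union_reindex (fun O H' =>
    (1 - p) ^ (O.card + H'.card) * (2 * p - 1) ^ (n - (O.card + H'.card)) *
      G H' (Finset.univ \ O))]
  rw [← Finset.sum_sigma' ((Finset.univ : Finset L).powerset) (fun S => S.powerset)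
    (fun S O => (1 - p) ^ (O.card + (S \ O).card) *
      (2 * p - 1) ^ (n - (O.card + (S \ O).card)) * G (S \ O) (Finset.univ \ O))]
  apply Finset.sum_congr rfl
  intro S hS
  rw [Finset.mul_sum]
  apply Finset.sum_congr rfl
  intro O hO
  have hOZ : O ⊆ S := Finset.mem_powerset.mp hO
  have e5 : O.card + (S \ O).card = S.card := by
    have := Finset.card_sdiff_of_subset hOZ
    have := Finset.card_le_card hOZ
    omega
  rw [e5]

/-- Rewrite the benchmark as a sum over split worlds. -/
lemma bench_to_splits (p : ℝ) (F : Finset L → ℝ) :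
    expSubsets p Finset.univ (fun H => F (Finset.univ \ H)) =
      ∑ S ∈ (Finset.univ : Finset L).powerset,
        (1 - p) ^ S.card * (2 * p - 1) ^ ((Finset.univ : Finset L).card - S.card) *
          ∑ O ∈ S.powerset, F O := by
  classical
  set n := (Finset.univ : Finset L).card with hn
  rw [expSubsets]
  rw [← powerset_compl_reindex (Finset.univ : Finset L)
    (fun H => p ^ H.card * (1 - p) ^ (n - H.card) * F (Finset.univ \ H))]
  have h1 : ∀ O ∈ (Finset.univ : Finset L).powerset,
      p ^ (Finset.univ \ O).card * (1 - p) ^ (n - (Finset.univ \ O).card) *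
        F (Finset.univ \ (Finset.univ \ O)) =
      ∑ H' ∈ (Finset.univ \ O).powerset,
        (1 - p) ^ (O.card + H'.card) * (2 * p - 1) ^ (n - (O.card + H'.card)) * F O := by
    intro O hO
    have hcO : O.card ≤ n := Finset.card_le_card (Finset.subset_univ O)
    have hcs : (Finset.univ \ O).card = n - O.card :=
      Finset.card_sdiff_of_subset (Finset.subset_univ O)
    have hOO : Finset.univ \ (Finset.univ \ O) = O :=
      Finset.sdiff_sdiff_eq_self (Finset.subset_univ O)
    rw [hOO]
    have hxy : (1 - p) + (2 * p - 1) = p := by ring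
    have hbin := binom_split (1 - p) (2 * p - 1) (Finset.univ \ O)
    rw [hxy] at hbin
    rw [hbin, Finset.sum_mul, Finset.sum_mul]
    apply Finset.sum_congr rfl
    intro H' hH'
    have hcH : H'.card ≤ (Finset.univ \ O).card :=
      Finset.card_le_card (Finset.mem_powerset.mp hH')
    have e3 : n - (Finset.univ \ O).card = O.card := by omega
    have e4 : (Finset.univ \ O).card - H'.card = n - (O.card + H'.card) := by omega
    rw [e3, e4, pow_add]
    ring
  rw [Finset.sum_congr rfl h1]
  rw [Finset.sum_sigma' ((Finset.univ : Finset L).powerset)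
    (fun O => ((Finset.univ : Finset L) \ O).powerset)
    (fun O H' => (1 - p) ^ (O.card + H'.card) *
      (2 * p - 1) ^ (n - (O.card + H'.card)) * F O)]
  rw [sigma_union_reindex (fun O H' =>
    (1 - p) ^ (O.card + H'.card) * (2 * p - 1) ^ (n - (O.card + H'.card)) * F O)]
  rw [← Finset.sum_sigma' ((Finset.univ : Finset L).powerset) (fun S => S.powerset)
    (fun S O => (1 - p) ^ (O.card + (S \ O).card) *
      (2 * p - 1) ^ (n - (O.card + (S \ O).card)) * F O)]
  apply Finset.sum_congr rfl
  intro S hS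
  rw [Finset.mul_sum]
  apply Finset.sum_congr rfl
  intro O hO
  have hOZ : O ⊆ S := Finset.mem_powerset.mp hO
  have e5 : O.card + (S \ O).card = S.card := by
    have := Finset.card_sdiff_of_subset hOZ
    have := Finset.card_le_card hOZ
    omega
  rw [e5]

end Prob


/-- In the AOSp model with `p > 1/2`, subsample the history: let
`H' ⊆ H` contain each vertex of `H` independently with probability `(1-p)/p`.  Then the
greedy-based algorithm run with sample `L' = H'` satisfies, for every adversarial
(`H`-dependent) arrival-order rule `σ` of `O = L \ H`,
`E[w(M)] ≥ (1/4) · E[OPT(G[O])]`. -/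
theorem stmt11 {L R : Type*} [Fintype L] [DecidableEq L] [DecidableEq R]
    (E : Finset (L × R)) (w : L × R → ℝ)
    (hw0 : ∀ e ∈ E, 0 ≤ w e) (hwinj : Set.InjOn w ↑E)
    (p : ℝ) (hp1 : 1 / 2 < p) (hp2 : p ≤ 1)
    (σ : Finset L → List L)
    (hσ : ∀ H : Finset L, (σ H).Perm (Finset.univ \ H).toList) :
    expSubsets p Finset.univ (fun H =>
        expSubsets ((1 - p) / p) H (fun H' => ∑ e ∈ runB E w H' (σ H), w e))
      ≥ (1 / 4) *
        expSubsets p Finset.univ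
          (fun H => optWeight w bconf (subL E (Finset.univ \ H))) := by
  classical
  have hp0 : p ≠ 0 := by intro h; rw [h] at hp1; norm_num at hp1
  rw [expSubsets_to_splits hp0 (fun H' H => ∑ e ∈ runB E w H' (σ H), w e)]
  rw [bench_to_splits p (fun O => optWeight w bconf (subL E O))]
  rw [Finset.mul_sum]
  apply Finset.sum_le_sum
  intro S hS
  have hc : 0 ≤ (1 - p) ^ S.card *
      (2 * p - 1) ^ ((Finset.univ : Finset L).card - S.card) := by
    apply mul_nonneg
    · exact pow_nonneg (by linarith) _
    · exact pow_nonneg (by linarith) _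
  have hords : ∀ O ∈ S.powerset, ((fun O => σ (Finset.univ \ O)) O).toFinset = O := by
    intro O hO
    have h1 : (σ (Finset.univ \ O)).toFinset =
        ((Finset.univ \ (Finset.univ \ O)).toList).toFinset :=
      List.toFinset_eq_of_perm _ _ (hσ (Finset.univ \ O))
    rw [h1, Finset.toList_toFinset]
    exact Finset.sdiff_sdiff_eq_self (Finset.subset_univ O)
  have hmain := perS hw0 hwinj S (fun O => σ (Finset.univ \ O)) hords
  calc (1 / 4) * ((1 - p) ^ S.card *
        (2 * p - 1) ^ ((Finset.univ : Finset L).card - S.card) *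
        ∑ O ∈ S.powerset, optWeight w bconf (subL E O))
      = ((1 - p) ^ S.card * (2 * p - 1) ^ ((Finset.univ : Finset L).card - S.card)) *
        ((1 / 4) * ∑ O ∈ S.powerset, optWeight w bconf (subL E O)) := by ring
    _ ≤ ((1 - p) ^ S.card * (2 * p - 1) ^ ((Finset.univ : Finset L).card - S.card)) *
        ∑ O ∈ S.powerset, ∑ e ∈ runB E w (S \ O) (σ (Finset.univ \ O)), w e :=
          mul_le_mul_of_nonneg_left hmain hc
end

section
/- Let ALG be an order-oblivious c-competitive algorithm for a random-order batched online selection problem with environment E = (U, P, J), where U = {1,…,m} is the universe, P = {P_1,…,P_n} partitions U into items, and J ⊆ 2^U is the family of feasible sets. Construct ALG' as follows: given the sample weight vectors s_1,…,s_n in the two-faced model, draw a uniformly random permutation j_1,…,j_n of [n], feed items P_{j_1},…,P_{j_k} with weights s_{j_1},…,s_{j_k} to ALG as its sampling phase (k being ALG's sampling-phase length); then, as each online item P_{i_j} with weights w_{i_j} arrives, ignore it if i_j ∈ {j_1,…,j_k} and otherwise pass it to ALG, accepting/rejecting identically. Then ALG' is c-competitive in the two-faced model: for any instance given by two weight vectors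 f_{i,1}, f_{i,2} per item, E[ALG'] ≥ c · E[OPT], where for each i one of f_{i,1}, f_{i,2} is uniformly and independently chosen as the sample s_i and the other as the online weight w_i, the online items arrive in adversarial order (possibly depending on the realization), and OPT is the maximum total w-weight of a feasible set. -/
open Finset

open scoped Classical

/-- The indices `π(0), …, π(k-1)`: the first `k` items of the arrival order given by the
permutation `π`. -/
def prefixIdx {n : ℕ} (π : Equiv.Perm (Fin n)) (k : ℕ) : List (Fin n) :=
  (List.ofFn fun t => π t).take k

/-- Run a (deterministic) batched online selection algorithm `A` on the online item
sequence `online`, after it has seen the sample `sample`.  Each arriving item is a pair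
(item index, weight vector for the elements); the algorithm is given the sample, the
list of previously arrived items, the set of elements accepted so far and the current
item, and returns the set of elements it accepts now (only elements of the current item
count).  The result is the total weight of all accepted elements, each counted with the
weight vector of its item at its arrival. -/
noncomputable def runValue {m n : ℕ} (itemOf : Fin m → Fin n)
    (A : List (Fin n × (Fin m → ℝ)) → List (Fin n × (Fin m → ℝ)) → Finset (Fin m) →
         (Fin n × (Fin m → ℝ)) → Finset (Fin m))
    (sample : List (Fin n × (Fin m → ℝ)))
    (online : List (Fin n × (Fin m → ℝ))) : ℝ :=
  (online.foldl
    (fun st cur =>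
      let S := ((A sample st.1 st.2.1 cur).filter fun e => itemOf e = cur.1) \ st.2.1
      (st.1 ++ [cur], st.2.1 ∪ S, st.2.2 + ∑ e ∈ S, cur.2 e))
    (([] : List (Fin n × (Fin m → ℝ))), (∅ : Finset (Fin m)), (0 : ℝ))).2.2

/-- `OPT` for a batched selection environment: the maximum total weight of a feasible
set, where element `e` has weight `z (itemOf e) e` under the weight assignment `z`. -/
noncomputable def optSel {m n : ℕ} (itemOf : Fin m → Fin n)
    (J : Finset (Fin m) → Prop) (hJ : J ∅) (z : Fin n → Fin m → ℝ) : ℝ :=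
  (Finset.univ.powerset.filter J).sup'
    ⟨∅, Finset.mem_filter.mpr ⟨Finset.empty_mem_powerset _, hJ⟩⟩
    (fun S => ∑ e ∈ S, z (itemOf e) e)

lemma prefixIdx_nodup {n : ℕ} (π : Equiv.Perm (Fin n)) (k : ℕ) :
    (prefixIdx π k).Nodup :=
  (List.take_sublist _ _).nodup (List.nodup_ofFn.mpr π.injective)

lemma perm_aux {n : ℕ} (K L : List (Fin n)) (hK : K.Nodup)
    (hL : L.Perm (List.ofFn fun t => t)) :
    (K ++ L.filter fun i => i ∉ K).Perm (List.ofFn fun t => t) := by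
  classical
  have hLnd : L.Nodup := hL.nodup_iff.mpr (List.nodup_ofFn.mpr fun a b h => h)
  have h1 : (L.filter fun i => i ∈ K).Perm K := by
    apply List.perm_of_nodup_nodup_toFinset_eq (hLnd.filter _) hK
    ext x
    simp [List.mem_filter, hL.mem_iff, List.mem_ofFn]
  have h2 := List.filter_append_perm (fun i => decide (i ∈ K)) L
  have h3 : (fun x => !decide (x ∈ K)) = (fun i : Fin n => decide (i ∉ K)) := by
    funext x; simp
  rw [h3] at h2
  exact ((h1.symm.append_right _).trans h2).trans hL

/-- Reduction from order-oblivious algorithms to the two-faced model.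
Let `ALG` be an order-oblivious `c`-competitive algorithm for the batched online
selection problem with universe `Fin m`, items indexed by `Fin n` via `itemOf`, and
feasible family `J` (with `J ∅`).  `ALG` is modelled by a finite coin space `Ω` with
distribution `ν`, a (random) sampling-phase length `k ω ≤ n`, and decision maps `A ω`
that preserve feasibility; order-obliviousness (`hOO`) states that for every nonnegative
weight assignment `z` and every adversarial-order rule `ρ` for the items remaining after
the random sampling phase (the sample being the first `k ω` items of a uniformly random
permutation), the expected accepted weight is at least `c · OPT(z)`.

Then the algorithm `ALG'` of the reduction — which, for the two-faced instance
`(f₁, f₂)` with sampled faces `s_i` and online faces `w_i` determined by `ε`, draws a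
uniformly random permutation `π`, feeds `ALG` the items `π(0), …, π(k-1)` weighted with
their sample faces as the sampling phase, ignores online arrivals whose index lies in
this prefix, and passes the rest to `ALG` — is `c`-competitive in the two-faced model:
`E[ALG'] ≥ c · E[OPT]`, for every adversarial arrival-order rule `ord` that may depend
on the realization `ε`. -/
theorem stmt13 (m n : ℕ) (itemOf : Fin m → Fin n)
    (J : Finset (Fin m) → Prop) (hJ : J ∅) (c : ℝ)
    (Ω : Type) [Fintype Ω] (ν : Ω → ℝ) (hν0 : ∀ ω, 0 ≤ ν ω) (hν1 : ∑ ω, ν ω = 1)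
    (k : Ω → ℕ) (hk : ∀ ω, k ω ≤ n)
    (A : Ω → List (Fin n × (Fin m → ℝ)) → List (Fin n × (Fin m → ℝ)) →
         Finset (Fin m) → (Fin n × (Fin m → ℝ)) → Finset (Fin m))
    (hfeas : ∀ ω sample past acc cur, J acc →
      J (acc ∪ ((A ω sample past acc cur).filter fun e => itemOf e = cur.1)))
    (hOO : ∀ z : Fin n → Fin m → ℝ, (∀ i e, 0 ≤ z i e) →
      ∀ ρ : List (Fin n) → List (Fin n),
        (∀ (π : Equiv.Perm (Fin n)) (k' : ℕ), k' ≤ n →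
          (prefixIdx π k' ++ ρ (prefixIdx π k')).Perm (List.ofFn fun t => t)) →
        ∑ ω, ν ω *
            ((∑ π : Equiv.Perm (Fin n),
                runValue itemOf (A ω)
                  ((prefixIdx π (k ω)).map fun i => (i, z i))
                  ((ρ (prefixIdx π (k ω))).map fun i => (i, z i))) /
              (Nat.factorial n : ℝ))
          ≥ c * optSel itemOf J hJ z)
    (f1 f2 : Fin n → Fin m → ℝ)
    (hf1 : ∀ i e, 0 ≤ f1 i e) (hf2 : ∀ i e, 0 ≤ f2 i e)
    (ord : (Fin n → Bool) → List (Fin n))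
    (hord : ∀ ε, (ord ε).Perm (List.ofFn fun t => t)) :
    (1 / 2 ^ n) * ∑ ε : Fin n → Bool, ∑ ω, ν ω *
        ((∑ π : Equiv.Perm (Fin n),
            runValue itemOf (A ω)
              ((prefixIdx π (k ω)).map fun i => (i, if ε i then f1 i else f2 i))
              (((ord ε).filter fun i => i ∉ prefixIdx π (k ω)).map
                fun i => (i, if ε i then f2 i else f1 i))) /
          (Nat.factorial n : ℝ))
      ≥ c * ((1 / 2 ^ n) * ∑ ε : Fin n → Bool,
          optSel itemOf J hJ fun i => if ε i then f2 i else f1 i) := by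
  classical
  rw [ge_iff_le, mul_left_comm]
  have h2n : (0:ℝ) ≤ 1 / 2 ^ n := by positivity
  apply mul_le_mul_of_nonneg_left _ h2n
  rw [Finset.mul_sum]
  -- abbreviations
  set N : ℝ := (Nat.factorial n : ℝ) with hN
  calc (∑ ε : Fin n → Bool, c * optSel itemOf J hJ fun i => if ε i then f2 i else f1 i)
      ≤ ∑ ε : Fin n → Bool, ∑ ω, ν ω *
          ((∑ π : Equiv.Perm (Fin n),
              runValue itemOf (A ω)
                ((prefixIdx π (k ω)).map fun i => (i, if ε i then f2 i else f1 i))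
                ((((ord fun j => if j ∈ prefixIdx π (k ω) then !ε j else ε j).filter
                    fun i => i ∉ prefixIdx π (k ω))).map
                  fun i => (i, if ε i then f2 i else f1 i))) / N) := by
        apply Finset.sum_le_sum
        intro ε _
        have hz : ∀ i e, 0 ≤ (fun i => if ε i then f2 i else f1 i) i e := by
          intro i e; by_cases h : ε i <;> simp [h, hf1 i e, hf2 i e]
        have hρ : ∀ (π : Equiv.Perm (Fin n)) (k' : ℕ), k' ≤ n →
            (prefixIdx π k' ++
              ((ord fun j => if j ∈ prefixIdx π k' then !ε j else ε j).filter
                fun i => i ∉ prefixIdx π k')).Perm (List.ofFn fun t => t) := by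
          intro π k' _
          exact perm_aux _ _ (prefixIdx_nodup π k') (hord _)
        exact hOO (fun i => if ε i then f2 i else f1 i) hz
          (fun L => (ord fun j => if j ∈ L then !ε j else ε j).filter fun i => i ∉ L) hρ
    _ = _ := by
        rw [Finset.sum_comm, Finset.sum_comm
          (f := fun ε ω => ν ω *
            ((∑ π : Equiv.Perm (Fin n),
              runValue itemOf (A ω)
                ((prefixIdx π (k ω)).map fun i => (i, if ε i then f1 i else f2 i))
                (((ord ε).filter fun i => i ∉ prefixIdx π (k ω)).map
                  fun i => (i, if ε i then f2 i else f1 i))) / N))]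
        apply Finset.sum_congr rfl
        intro ω _
        simp only [← mul_div_assoc, ← Finset.sum_div, ← Finset.mul_sum]
        congr 2
        rw [Finset.sum_comm, Finset.sum_comm
          (f := fun (ε : Fin n → Bool) (π : Equiv.Perm (Fin n)) =>
              runValue itemOf (A ω)
                ((prefixIdx π (k ω)).map fun i => (i, if ε i then f1 i else f2 i))
                (((ord ε).filter fun i => i ∉ prefixIdx π (k ω)).map
                  fun i => (i, if ε i then f2 i else f1 i)))]
        apply Finset.sum_congr rfl
        intro π _
        set K := prefixIdx π (k ω) with hK
        have hinv : Function.Involutive (fun (ε : Fin n → Bool) j =>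
            if j ∈ K then !ε j else ε j) := by
          intro ε; funext j; by_cases h : j ∈ K <;> simp [h]
        have := Equiv.sum_comp hinv.toPerm
          (fun ε : Fin n → Bool =>
            runValue itemOf (A ω)
              (K.map fun i => (i, if ε i then f1 i else f2 i))
              (((ord ε).filter fun i => i ∉ K).map
                fun i => (i, if ε i then f2 i else f1 i)))
        rw [← this]
        apply Finset.sum_congr rfl
        intro ε _
        simp only [Function.Involutive.coe_toPerm]
        congr 1
        · apply List.map_congr_left
          intro i hi
          simp only [hi, if_true]
          cases h : ε i <;> simp [h]
        · apply List.map_congr_left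
          intro i hi
          have hiK : i ∉ K := by
            have := List.of_mem_filter hi
            simpa using this
          simp only [hiK, if_false]
end

section
/- Let G = (V, E) be a graph with nonnegative, pairwise-distinct edge weights, let p ∈ [0,1], and let E' ⊆ E contain each edge independently with probability p. Consider the greedy-based edge-arrival algorithm: an edge e ∈ E \ E' is a candidate if e ∈ Greedy(G[E' ∪ {e}]); the edges of E \ E' are processed in some order and a candidate edge is added to the output matching M if both its endpoints are currently unmatched in M. Then for every rule assigning an arrival order to E \ E' (possibly depending on E'), E[w(M)] ≥ ((1−p)(2p−1)/p) · E[w(Greedy(G[E']))]. -/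
open Finset

open scoped Classical

/-- Two edges of a general graph (given as ordered pairs of endpoints) conflict iff
they share an endpoint. -/
def gconf {V : Type*} (e f : V × V) : Prop :=
  e.1 = f.1 ∨ e.1 = f.2 ∨ e.2 = f.1 ∨ e.2 = f.2

/-- One step of the greedy-based edge-arrival algorithm with sample `E'`: the arriving
edge `e` is a candidate if `e ∈ Greedy(G[E' ∪ {e}])`, and a candidate is added if both
of its endpoints are currently unmatched. -/
noncomputable def stepE {V : Type*} [DecidableEq V] (w : V × V → ℝ)
    (E' : Finset (V × V)) (M : Finset (V × V)) (e : V × V) : Finset (V × V) :=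
  M ∪ (greedy w gconf (insert e E')).filter
      (fun f => f = e ∧ ∀ g ∈ M, ¬ gconf g f)

/-- The output matching of the greedy-based edge-arrival algorithm with sample `E'`,
when the online edges arrive in the order given by `order`. -/
noncomputable def runE {V : Type*} [DecidableEq V] (w : V × V → ℝ)
    (E' : Finset (V × V)) (order : List (V × V)) : Finset (V × V) :=
  order.foldl (stepE w E') ∅

/-!
Let `m = ∑ₑ w(e) · Pr[e ∈ Greedy(G[E' ∪ {e}])]`. This event ignores the coin of `e`, so the
sampled greedy matching has expected weight `p · m`, and the candidates `(1 - p) · m`.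

A candidate missed by the algorithm is charged injectively to a pair `(h, u)` with `u` an endpoint
of a candidate `h` that has a lighter candidate at `u`: to itself if it has such a side, and
otherwise to the side it shares with the heavier accepted edge that blocked it. Given that `h` is
a candidate, a lighter candidate at `u` exists iff the heaviest edge at `u` lighter than `h` that
greedy would take is unsampled; conditioning on that edge, this has probability `1 - p`. So the
missed weight is at most `2 (1 - p)² · m`, and `E[w(M)] ≥ (1 - p)(2p - 1) · m`.
-/

namespace GreedyMatching

theorem sum_le_sum_of_charge {ι κ : Type*} {s : Finset ι} {t : Finset κ} {f : ι → ℝ}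
    {g : κ → ℝ} (R : ι → κ → Prop) (hex : ∀ i ∈ s, ∃ k ∈ t, R i k ∧ f i ≤ g k)
    (huniq : ∀ i ∈ s, ∀ j ∈ s, ∀ k, R i k → R j k → i = j) (hg : ∀ k ∈ t, 0 ≤ g k) :
    ∑ i ∈ s, f i ≤ ∑ k ∈ t, g k := by
  classical
  rcases isEmpty_or_nonempty κ with hκ | hκ
  · rw [eq_empty_of_forall_notMem fun i hi => (hex i hi).elim fun k _ => hκ.elim k, sum_empty]
    exact sum_nonneg hg
  choose! φ hφt hφR hφle using hex
  have hinj : Set.InjOn φ s := fun i hi j hj hij =>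
    huniq i hi j hj (φ j) (hij ▸ hφR i hi) (hφR j hj)
  calc ∑ i ∈ s, f i ≤ ∑ i ∈ s, g (φ i) := sum_le_sum hφle
    _ = ∑ k ∈ s.image φ, g k := (sum_image hinj).symm
    _ ≤ ∑ k ∈ t, g k := sum_le_sum_of_subset_of_nonneg
        (image_subset_iff.mpr hφt) fun k hk _ => hg k hk

theorem sum_boole_eq_ite_exists {ι : Type*} {Γ : Finset ι} {P : ι → Prop} [DecidablePred P]
    (huniq : ∀ a ∈ Γ, ∀ b ∈ Γ, P a → P b → a = b) :
    ∑ γ ∈ Γ, (if P γ then (1 : ℝ) else 0) = if ∃ γ ∈ Γ, P γ then 1 else 0 := by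
  split_ifs with hex
  · obtain ⟨γ, hγ, hP⟩ := hex
    rw [sum_eq_single_of_mem γ hγ fun b hb hbγ => if_neg fun hPb => hbγ (huniq b hb γ hγ hPb hP),
      if_pos hP]
  · push Not at hex
    exact sum_eq_zero fun γ hγ => if_neg (hex γ hγ)

section Greedy

theorem filter_not_conflict_ssubset {α : Type*} {c : α → α → Prop} (hc : ∀ a, c a a)
    {F : Finset α} {a : α} (ha : a ∈ F) : {f ∈ F | ¬ c a f} ⊂ F :=
  filter_ssubset.mpr ⟨a, ha, not_not.mpr (hc a)⟩

variable {α : Type*} [DecidableEq α] (w : α → ℝ) {c : α → α → Prop}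

theorem greedy_empty : greedy w c ∅ = ∅ := rfl

theorem greedyAux_subset (n : ℕ) (F : Finset α) : greedyAux w c n F ⊆ F := by
  induction n generalizing F with
  | zero => exact empty_subset F
  | succ n ih =>
    unfold greedyAux
    split_ifs with hF
    · exact insert_subset (F.exists_max_image w hF).choose_spec.1
        ((ih _).trans (filter_subset _ _))
    · exact empty_subset F

theorem greedy_subset (F : Finset α) : greedy w c F ⊆ F := greedyAux_subset w _ F

variable {w}

theorem greedyAux_eq_greedy (hc : ∀ a, c a a) {n : ℕ} {F : Finset α} (hn : #F ≤ n) :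
    greedyAux w c n F = greedy w c F := by
  induction n using Nat.strong_induction_on generalizing F with
  | _ n ih =>
    rcases F.eq_empty_or_nonempty with rfl | hF
    · cases n <;> simp [greedyAux, greedy]
    obtain ⟨m, hm⟩ : ∃ m, #F = m + 1 := ⟨#F - 1, by have := hF.card_pos; omega⟩
    obtain ⟨k, rfl⟩ : ∃ k, n = k + 1 := ⟨n - 1, by omega⟩
    have hlt := card_lt_card
      (filter_not_conflict_ssubset hc (F.exists_max_image w hF).choose_spec.1)
    rw [greedy, hm]
    simp only [greedyAux, dif_pos hF]
    rw [ih k (by omega) (by omega), ih m (by omega) (by omega)]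

theorem greedy_eq_insert (hc : ∀ a, c a a) {F : Finset α} (hF : F.Nonempty) :
    ∃ a ∈ F, (∀ x ∈ F, w x ≤ w a) ∧
      greedy w c F = insert a (greedy w c {f ∈ F | ¬ c a f}) := by
  obtain ⟨ha, hmax⟩ := (F.exists_max_image w hF).choose_spec
  refine ⟨_, ha, hmax, ?_⟩
  obtain ⟨m, hm⟩ : ∃ m, #F = m + 1 := ⟨#F - 1, by have := hF.card_pos; omega⟩
  have hlt := card_lt_card (filter_not_conflict_ssubset hc ha)
  rw [greedy, hm]
  simp only [greedyAux, dif_pos hF]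
  rw [greedyAux_eq_greedy hc (by omega)]

theorem isMatching_greedy (hc : ∀ a, c a a) (hs : ∀ a b, c a b → c b a) (F : Finset α) :
    isMatching c (greedy w c F) := by
  induction F using Finset.strongInduction with
  | H F ih =>
    rcases F.eq_empty_or_nonempty with rfl | hF
    · simp [greedy_empty, isMatching]
    obtain ⟨a, ha, -, hgr⟩ := greedy_eq_insert (w := w) hc hF
    have hrest := ih _ (filter_not_conflict_ssubset hc ha)
    have hfar : ∀ f ∈ greedy w c {f ∈ F | ¬ c a f}, ¬ c a f := fun f hf =>
      (mem_filter.mp (greedy_subset w _ hf)).2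
    rw [hgr]
    intro e he f hf hef
    rcases mem_insert.mp he with rfl | he <;> rcases mem_insert.mp hf with rfl | hf
    · exact absurd rfl hef
    · exact hfar f hf
    · exact fun hcf => hfar e he (hs _ _ hcf)
    · exact hrest e he f hf hef

theorem filter_greedy (hc : ∀ a, c a a) {F : Finset α} (hinj : Set.InjOn w F) (t : ℝ) :
    {f ∈ greedy w c F | t ≤ w f} = greedy w c {f ∈ F | t ≤ w f} := by
  induction F using Finset.strongInduction with
  | H F ih =>
    rcases F.eq_empty_or_nonempty with rfl | hF
    · simp [greedy_empty]
    obtain ⟨a, ha, hmax, hgr⟩ := greedy_eq_insert (w := w) hc hF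
    by_cases hta : t ≤ w a
    · have haT : a ∈ {f ∈ F | t ≤ w f} := mem_filter.mpr ⟨ha, hta⟩
      obtain ⟨a', ha', hmax', hgr'⟩ := greedy_eq_insert (w := w) hc ⟨a, haT⟩
      have : a' = a := hinj (filter_subset _ _ ha') ha
        (le_antisymm (hmax _ (filter_subset _ _ ha')) (hmax' a haT))
      subst this
      rw [hgr, hgr', filter_insert, if_pos hta,
        ih _ (filter_not_conflict_ssubset hc ha) (hinj.mono (filter_subset _ _)),
        filter_comm]
    · have hlow : ∀ x ∈ F, ¬ t ≤ w x := fun x hx ht => hta (ht.trans (hmax x hx))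
      rw [filter_false_of_mem hlow, filter_false_of_mem fun x hx => hlow x (greedy_subset w F hx),
        greedy_empty]

theorem mem_greedy_congr (hc : ∀ a, c a a) {F G : Finset α} (hF : Set.InjOn w F)
    (hG : Set.InjOn w G) {e : α} (hFG : {f ∈ F | w e ≤ w f} = {f ∈ G | w e ≤ w f}) :
    e ∈ greedy w c F ↔ e ∈ greedy w c G := by
  have hheavy : ∀ {H : Finset α}, Set.InjOn w H →
      (e ∈ greedy w c H ↔ e ∈ greedy w c {f ∈ H | w e ≤ w f}) := fun hH => by
    rw [← filter_greedy hc hH]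
    simp
  rw [hheavy hF, hheavy hG, hFG]

theorem notMem_greedy_insert_of_conflict (hc : ∀ a, c a a) (hs : ∀ a b, c a b → c b a)
    {F : Finset α} {γ g : α} (hinj : Set.InjOn w ↑(insert g F)) (hγ : γ ∈ greedy w c F)
    (hlt : w g < w γ) (hγg : c γ g) : g ∉ greedy w c (insert g F) := by
  have hγ' : γ ∈ greedy w c (insert g F) := by
    refine (mem_greedy_congr hc (hinj.mono (by simp)) hinj ?_).mp hγ
    rw [filter_insert, if_neg (not_le.mpr hlt)]
  intro hg
  exact isMatching_greedy hc hs _ γ hγ' g hg (by rintro rfl; exact lt_irrefl _ hlt) hγg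

end Greedy

section Expectation

variable {ι : Type*} {p : ℝ} {s : Finset ι}

theorem expSubsets_congr {f g : Finset ι → ℝ} (hfg : ∀ A ⊆ s, f A = g A) :
    expSubsets p s f = expSubsets p s g :=
  sum_congr rfl fun A hA => by rw [hfg A (mem_powerset.mp hA)]

theorem expSubsets_mono (hp : p ∈ Set.Icc (0 : ℝ) 1) {f g : Finset ι → ℝ}
    (hfg : ∀ A ⊆ s, f A ≤ g A) : expSubsets p s f ≤ expSubsets p s g := by
  obtain ⟨hp0, hp1⟩ := hp
  have hq0 : 0 ≤ 1 - p := sub_nonneg.mpr hp1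
  exact sum_le_sum fun A hA =>
    mul_le_mul_of_nonneg_left (hfg A (mem_powerset.mp hA)) (by positivity)

theorem expSubsets_nonneg (hp : p ∈ Set.Icc (0 : ℝ) 1) {f : Finset ι → ℝ}
    (hf : ∀ A ⊆ s, 0 ≤ f A) : 0 ≤ expSubsets p s f := by
  simpa [expSubsets] using expSubsets_mono hp hf

theorem expSubsets_sub (f g : Finset ι → ℝ) :
    expSubsets p s (fun A => f A - g A) = expSubsets p s f - expSubsets p s g := by
  simp only [expSubsets, mul_sub, sum_sub_distrib]

theorem expSubsets_const_mul (a : ℝ) (f : Finset ι → ℝ) :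
    expSubsets p s (fun A => a * f A) = a * expSubsets p s f := by
  simp only [expSubsets, mul_sum]
  exact sum_congr rfl fun A _ => by ring

theorem expSubsets_sum {κ : Type*} (t : Finset κ) (f : κ → Finset ι → ℝ) :
    expSubsets p s (fun A => ∑ x ∈ t, f x A) = ∑ x ∈ t, expSubsets p s (f x) := by
  simp only [expSubsets, mul_sum]
  exact sum_comm

variable [DecidableEq ι]

theorem expSubsets_insert {i : ι} (hi : i ∉ s) (f : Finset ι → ℝ) :
    expSubsets p (insert i s) f
      = expSubsets p s (fun A => (1 - p) * f A + p * f (insert i A)) := by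
  rw [expSubsets, sum_powerset_insert hi, ← sum_add_distrib, card_insert_of_notMem hi]
  refine sum_congr rfl fun A hA => ?_
  have hAs := mem_powerset.mp hA
  have hcard := card_le_card hAs
  rw [card_insert_of_notMem fun h => hi (hAs h),
    show #s + 1 - #A = #s - #A + 1 by omega, Nat.add_sub_add_right]
  ring

theorem expSubsets_sum_weight {F : Finset ι → Finset ι} (hF : ∀ A ⊆ s, F A ⊆ s)
    (w : ι → ℝ) : expSubsets p s (fun A => ∑ e ∈ F A, w e)
      = ∑ h ∈ s, w h * expSubsets p s (fun A => if h ∈ F A then 1 else 0) := by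
  simp only [← expSubsets_const_mul, ← expSubsets_sum]
  refine expSubsets_congr fun A hA => ?_
  simp only [mul_ite, mul_one, mul_zero]
  rw [← sum_filter, filter_mem_eq_inter, inter_eq_right.mpr (hF A hA)]

variable {i : ι} {P : Finset ι → Prop} [DecidablePred P]

theorem expSubsets_indicator_notMem (hi : i ∈ s) (hP : ∀ A ⊆ s, P (insert i A) ↔ P A) :
    expSubsets p s (fun A => if i ∉ A ∧ P A then 1 else 0)
      = (1 - p) * expSubsets p s (fun A => if P A then 1 else 0) := by
  have hni := notMem_erase i s
  rw [← insert_erase hi, expSubsets_insert hni, expSubsets_insert hni, expSubsets, expSubsets,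
    mul_sum]
  refine sum_congr rfl fun A hA => ?_
  have hAs := mem_powerset.mp hA
  have hiA : i ∉ A := fun h => hni (hAs h)
  simp only [hiA, not_false_eq_true, true_and, mem_insert_self, not_true_eq_false, false_and,
    if_false, hP A (hAs.trans (erase_subset i s))]
  ring

theorem expSubsets_indicator_mem (hi : i ∈ s) (hP : ∀ A ⊆ s, P (insert i A) ↔ P A) :
    expSubsets p s (fun A => if i ∈ A ∧ P A then 1 else 0)
      = p * expSubsets p s (fun A => if P A then 1 else 0) := by
  have hni := notMem_erase i s
  rw [← insert_erase hi, expSubsets_insert hni, expSubsets_insert hni, expSubsets, expSubsets,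
    mul_sum]
  refine sum_congr rfl fun A hA => ?_
  have hAs := mem_powerset.mp hA
  have hiA : i ∉ A := fun h => hni (hAs h)
  simp only [hiA, false_and, if_false, mem_insert_self, true_and,
    hP A (hAs.trans (erase_subset i s))]
  ring

end Expectation

section Sampling

variable {V : Type*}

def IsEndpoint (u : V) (e : V × V) : Prop := u = e.1 ∨ u = e.2

def endpoint (e : V × V) (b : Bool) : V := cond b e.1 e.2

theorem gconf_refl (e : V × V) : gconf e e := Or.inl rfl

theorem gconf_symm (e f : V × V) (h : gconf e f) : gconf f e := by
  unfold gconf at *; tauto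

theorem gconf_iff_exists_isEndpoint {e f : V × V} :
    gconf e f ↔ ∃ u, IsEndpoint u e ∧ IsEndpoint u f := by
  unfold gconf IsEndpoint
  constructor
  · rintro (h | h | h | h)
    exacts [⟨e.1, .inl rfl, .inl h⟩, ⟨e.1, .inl rfl, .inr h⟩, ⟨e.2, .inr rfl, .inl h⟩,
      ⟨e.2, .inr rfl, .inr h⟩]
  · rintro ⟨u, h | h, h' | h'⟩ <;> simp only [← h, ← h', true_or, or_true]

theorem isEndpoint_iff_exists_endpoint {u : V} {e : V × V} :
    IsEndpoint u e ↔ ∃ b, endpoint e b = u := by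
  unfold IsEndpoint endpoint
  constructor
  · rintro (rfl | rfl)
    exacts [⟨true, rfl⟩, ⟨false, rfl⟩]
  · rintro ⟨b | b, rfl⟩ <;> simp

variable [DecidableEq V] (w : V × V → ℝ) (E : Finset (V × V))

def InGreedyWith (A : Finset (V × V)) (g : V × V) : Prop :=
  g ∈ greedy w gconf (insert g A)

noncomputable def candidates (A : Finset (V × V)) : Finset (V × V) :=
  {g ∈ E | g ∉ A ∧ InGreedyWith w A g}

variable {w E}

theorem mem_candidates {A : Finset (V × V)} {g : V × V} :
    g ∈ candidates w E A ↔ g ∈ E ∧ g ∉ A ∧ InGreedyWith w A g := by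
  simp [candidates]

theorem mem_greedy_iff_inGreedyWith {A : Finset (V × V)} {h : V × V} :
    h ∈ greedy w gconf A ↔ h ∈ A ∧ InGreedyWith w A h := by
  unfold InGreedyWith
  constructor
  · intro hh
    have hA := greedy_subset w A hh
    exact ⟨hA, by rwa [insert_eq_of_mem hA]⟩
  · rintro ⟨hA, hh⟩
    rwa [insert_eq_of_mem hA] at hh

theorem inGreedyWith_insert_self {A : Finset (V × V)} {g : V × V} :
    InGreedyWith w (insert g A) g ↔ InGreedyWith w A g := by
  rw [InGreedyWith, InGreedyWith, insert_idem]

theorem inGreedyWith_insert_of_lt (hwinj : Set.InjOn w E) {A : Finset (V × V)} (hA : A ⊆ E)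
    {γ g : V × V} (hγ : γ ∈ E) (hg : g ∈ E) (hlt : w γ < w g) :
    InGreedyWith w (insert γ A) g ↔ InGreedyWith w A g := by
  refine mem_greedy_congr gconf_refl (hwinj.mono (coe_subset.mpr (insert_subset hg
    (insert_subset hγ hA)))) (hwinj.mono (coe_subset.mpr (insert_subset hg hA))) ?_
  rw [insert_comm, filter_insert _ γ, if_neg (not_le.mpr hlt)]

theorem mem_candidates_insert_of_lt (hwinj : Set.InjOn w E) {A : Finset (V × V)} (hA : A ⊆ E)
    {γ h : V × V} (hγ : γ ∈ E) (hlt : w γ < w h) :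
    h ∈ candidates w E (insert γ A) ↔ h ∈ candidates w E A := by
  have hγh : h ≠ γ := by rintro rfl; exact lt_irrefl _ hlt
  simp only [mem_candidates, mem_insert, hγh, false_or]
  constructor
  · rintro ⟨hh, hhA, hq⟩
    exact ⟨hh, hhA, (inGreedyWith_insert_of_lt hwinj hA hγ hh hlt).mp hq⟩
  · rintro ⟨hh, hhA, hq⟩
    exact ⟨hh, hhA, (inGreedyWith_insert_of_lt hwinj hA hγ hh hlt).mpr hq⟩

end Sampling

section Algorithm

variable {V : Type*} [DecidableEq V] {w : V × V → ℝ} {E A : Finset (V × V)}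

theorem subset_foldl_stepE (l : List (V × V)) (M : Finset (V × V)) :
    M ⊆ l.foldl (stepE w A) M := by
  induction l generalizing M with
  | nil => exact subset_rfl
  | cons x t ih => exact subset_union_left.trans (ih _)

theorem foldl_stepE_subset (l : List (V × V)) (M : Finset (V × V)) :
    l.foldl (stepE w A) M ⊆ M ∪ {e ∈ l.toFinset | InGreedyWith w A e} := by
  induction l generalizing M with
  | nil => exact subset_union_left
  | cons x t ih =>
    refine (ih _).trans (union_subset (union_subset subset_union_left ?_) ?_)
    · intro f hf
      obtain ⟨hfg, rfl, -⟩ := mem_filter.mp hf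
      exact mem_union_right _ (mem_filter.mpr ⟨by simp, hfg⟩)
    · exact fun f hf => mem_union_right _ (filter_subset_filter _
      (by rw [List.toFinset_cons]; exact subset_insert _ _) hf)

theorem runE_subset_candidates {l : List (V × V)} (hl : ∀ x ∈ l, x ∈ E \ A) :
    runE w A l ⊆ candidates w E A := by
  intro e he
  have := foldl_stepE_subset l ∅ he
  simp only [empty_union, mem_filter, List.mem_toFinset] at this
  obtain ⟨hel, hq⟩ := this
  obtain ⟨heE, heA⟩ := mem_sdiff.mp (hl e hel)
  exact mem_candidates.mpr ⟨heE, heA, hq⟩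

theorem mem_foldl_stepE_or_conflict {l : List (V × V)} {e : V × V} (hel : e ∈ l)
    (hq : InGreedyWith w A e) (M : Finset (V × V)) :
    e ∈ l.foldl (stepE w A) M ∨ ∃ g ∈ l.foldl (stepE w A) M, g ≠ e ∧ gconf g e := by
  induction l generalizing M with
  | nil => exact absurd hel List.not_mem_nil
  | cons x t ih =>
    rcases List.mem_cons.mp hel with rfl | het
    · by_cases hacc : e ∈ stepE w A M e
      · exact .inl (subset_foldl_stepE t _ hacc)
      · have heM : e ∉ M := fun h => hacc (mem_union_left _ h)
        obtain ⟨g, hgM, hge⟩ : ∃ g ∈ M, gconf g e := by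
          by_contra! hfree
          exact hacc (mem_union_right _ (mem_filter.mpr ⟨hq, rfl, hfree⟩))
        exact .inr ⟨g, subset_foldl_stepE t _ (mem_union_left _ hgM),
          by rintro rfl; exact heM hgM, hge⟩
    · exact ih het _

theorem mem_runE_or_conflict {l : List (V × V)} (hl : ∀ x, x ∈ l ↔ x ∈ E \ A) {e : V × V}
    (he : e ∈ candidates w E A) :
    e ∈ runE w A l ∨ ∃ g ∈ runE w A l, g ≠ e ∧ gconf g e := by
  obtain ⟨heE, heA, hq⟩ := mem_candidates.mp he
  exact mem_foldl_stepE_or_conflict ((hl e).mpr (mem_sdiff.mpr ⟨heE, heA⟩)) hq ∅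

end Algorithm

section Charging

variable {V : Type*} [DecidableEq V] {w : V × V → ℝ} {E A : Finset (V × V)}

variable (w E A) in
def HasLighterCandidateAt (u : V) (h : V × V) : Prop :=
  ∃ g ∈ candidates w E A, w g < w h ∧ IsEndpoint u g

/-- Each candidate lost by `M` is charged either to one of its own sides carrying a lighter
candidate, or, if it has none, to the side of the heavier edge of `M` that blocked it. -/
theorem sum_candidates_sdiff_le (hwinj : Set.InjOn w E) (hw0 : ∀ e ∈ E, 0 ≤ w e)
    {M : Finset (V × V)} (hMC : M ⊆ candidates w E A)
    (hblock : ∀ e ∈ candidates w E A, e ∈ M ∨ ∃ g ∈ M, g ≠ e ∧ gconf g e) :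
    ∑ e ∈ candidates w E A \ M, w e
      ≤ ∑ x ∈ E ×ˢ (univ : Finset Bool), w x.1 *
          if x.1 ∈ candidates w E A ∧ HasLighterCandidateAt w E A (endpoint x.1 x.2) x.1
          then 1 else 0 := by
  refine sum_le_sum_of_charge (fun e x => x.1 = e ∨ (x.1 ∈ M ∧
      IsEndpoint (endpoint x.1 x.2) e ∧ ∀ u, IsEndpoint u e → ¬ HasLighterCandidateAt w E A u e))
    ?_ ?_ fun x hx => mul_nonneg (hw0 _ (mem_product.mp hx).1) (by split_ifs <;> norm_num)
  · intro e he
    obtain ⟨heC, heM⟩ := mem_sdiff.mp he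
    have heE := (mem_candidates.mp heC).1
    by_cases hlight : ∃ u, IsEndpoint u e ∧ HasLighterCandidateAt w E A u e
    · obtain ⟨u, hue, hu⟩ := hlight
      obtain ⟨b, rfl⟩ := isEndpoint_iff_exists_endpoint.mp hue
      exact ⟨(e, b), mem_product.mpr ⟨heE, mem_univ b⟩, .inl rfl, by simp [heC, hu]⟩
    push Not at hlight
    obtain hcon | ⟨g, hgM, hge, hgconf⟩ := hblock e heC
    · exact absurd hcon heM
    have hgC := hMC hgM
    obtain ⟨u, hug, hue⟩ := gconf_iff_exists_isEndpoint.mp hgconf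
    have hlt : w e < w g := (lt_or_gt_of_ne (hwinj.ne heE (mem_candidates.mp hgC).1
      hge.symm)).resolve_right fun hlt => hlight u hue ⟨g, hgC, hlt, hug⟩
    obtain ⟨b, rfl⟩ := isEndpoint_iff_exists_endpoint.mp hug
    refine ⟨(g, b), mem_product.mpr ⟨(mem_candidates.mp hgC).1, mem_univ b⟩,
      .inr ⟨hgM, hue, hlight⟩, ?_⟩
    have hlc : HasLighterCandidateAt w E A (endpoint g b) g := ⟨e, heC, hlt, hue⟩
    simpa [hgC, hlc] using hlt.le
  · intro e₁ he₁ e₂ he₂ x h₁ h₂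
    by_contra hne
    obtain ⟨he₁C, he₁M⟩ := mem_sdiff.mp he₁
    obtain ⟨he₂C, he₂M⟩ := mem_sdiff.mp he₂
    rcases h₁ with rfl | ⟨hxM, hu₁, hlight₁⟩ <;> rcases h₂ with h₂ | ⟨hxM', hu₂, hlight₂⟩
    · exact hne h₂
    · exact he₁M hxM'
    · exact he₂M (h₂ ▸ hxM)
    rcases lt_or_gt_of_ne (hwinj.ne (mem_candidates.mp he₁C).1 (mem_candidates.mp he₂C).1
      hne) with hlt | hlt
    · exact hlight₂ _ hu₂ ⟨e₁, he₁C, hlt, hu₁⟩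
    · exact hlight₁ _ hu₁ ⟨e₂, he₂C, hlt, hu₂⟩

end Charging

section LighterCandidates

variable {V : Type*} [DecidableEq V] {w : V × V → ℝ} {E A : Finset (V × V)}

variable (w E) in
noncomputable def lighterAt (u : V) (h : V × V) : Finset (V × V) :=
  {g ∈ E | w g < w h ∧ IsEndpoint u g}

variable (w) in
def IsHeaviestInGreedyWith (A Γ : Finset (V × V)) (γ : V × V) : Prop :=
  γ ∈ Γ ∧ InGreedyWith w A γ ∧ ∀ g ∈ Γ, InGreedyWith w A g → w g ≤ w γ

theorem IsHeaviestInGreedyWith.unique {Γ : Finset (V × V)} (hinj : Set.InjOn w Γ) {γ γ' : V × V}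
    (h : IsHeaviestInGreedyWith w A Γ γ) (h' : IsHeaviestInGreedyWith w A Γ γ') : γ = γ' :=
  hinj h.1 h'.1 (le_antisymm (h'.2.2 γ h.1 h.2.1) (h.2.2 γ' h'.1 h'.2.1))

theorem isHeaviestInGreedyWith_insert_iff (hwinj : Set.InjOn w E) (hA : A ⊆ E)
    {Γ : Finset (V × V)} (hΓ : Γ ⊆ E) {γ : V × V} (hγ : γ ∈ E) :
    IsHeaviestInGreedyWith w (insert γ A) Γ γ ↔ IsHeaviestInGreedyWith w A Γ γ := by
  have hmax : ∀ g ∈ Γ, (InGreedyWith w (insert γ A) g → w g ≤ w γ) ↔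
      (InGreedyWith w A g → w g ≤ w γ) := fun g hg => by
    rcases le_or_gt (w g) (w γ) with hle | hlt
    · simp [hle]
    · rw [inGreedyWith_insert_of_lt hwinj hA hγ (hΓ hg) hlt]
  simp only [IsHeaviestInGreedyWith, inGreedyWith_insert_self]
  exact and_congr_right' (and_congr_right' (forall₂_congr hmax))

/-- A sampled `γ` would lie in `Greedy(G[A])` and block every lighter edge at `u`. -/
theorem hasLighterCandidateAt_iff (hwinj : Set.InjOn w E) (hA : A ⊆ E) {u : V} {h : V × V} :
    HasLighterCandidateAt w E A u h ↔
      ∃ γ ∈ lighterAt w E u h, γ ∉ A ∧ IsHeaviestInGreedyWith w A (lighterAt w E u h) γ := by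
  constructor
  · rintro ⟨g₀, hg₀C, hg₀lt, hg₀u⟩
    obtain ⟨hg₀E, hg₀A, hg₀q⟩ := mem_candidates.mp hg₀C
    have hg₀Γ : g₀ ∈ lighterAt w E u h := mem_filter.mpr ⟨hg₀E, hg₀lt, hg₀u⟩
    obtain ⟨γ, hγQ, hγmax⟩ := exists_max_image {g ∈ lighterAt w E u h | InGreedyWith w A g} w
      ⟨g₀, mem_filter.mpr ⟨hg₀Γ, hg₀q⟩⟩
    obtain ⟨hγΓ, hγq⟩ := mem_filter.mp hγQ
    obtain ⟨hγE, -, hγu⟩ := mem_filter.mp hγΓ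
    refine ⟨γ, hγΓ, fun hγA => ?_, hγΓ, hγq, fun g hg hgq => hγmax g (mem_filter.mpr ⟨hg, hgq⟩)⟩
    have hlt : w g₀ < w γ := lt_of_le_of_ne (hγmax g₀ (mem_filter.mpr ⟨hg₀Γ, hg₀q⟩))
      (hwinj.ne hg₀E hγE (by rintro rfl; exact hg₀A hγA))
    refine notMem_greedy_insert_of_conflict gconf_refl gconf_symm
      (hwinj.mono (coe_subset.mpr (insert_subset hg₀E hA)))
      (mem_greedy_iff_inGreedyWith.mpr ⟨hγA, hγq⟩) hlt
      (gconf_iff_exists_isEndpoint.mpr ⟨u, hγu, hg₀u⟩) hg₀q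
  · rintro ⟨γ, hγΓ, hγA, -, hγq, -⟩
    obtain ⟨hγE, hγlt, hγu⟩ := mem_filter.mp hγΓ
    exact ⟨γ, mem_candidates.mpr ⟨hγE, hγA, hγq⟩, hγlt, hγu⟩

end LighterCandidates

section Probabilities

variable {V : Type*} [DecidableEq V] {w : V × V → ℝ} {E : Finset (V × V)} {p : ℝ}

/-- Conditioned on the heaviest edge `γ` at `u` lighter than `h` that greedy would take, the
event does not depend on the coin of `γ`, which must come up "unsampled". -/
theorem expSubsets_candidate_lighterAt_le (hp : p ∈ Set.Icc (0 : ℝ) 1) (hwinj : Set.InjOn w E)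
    {h : V × V} (u : V) :
    expSubsets p E
        (fun A => if h ∈ candidates w E A ∧ HasLighterCandidateAt w E A u h then 1 else 0)
      ≤ (1 - p) * expSubsets p E (fun A => if h ∈ candidates w E A then 1 else 0) := by
  set Γ := lighterAt w E u h
  have hΓE : Γ ⊆ E := filter_subset _ _
  have huniq : ∀ A, ∀ γ ∈ Γ, ∀ γ' ∈ Γ, IsHeaviestInGreedyWith w A Γ γ →
      IsHeaviestInGreedyWith w A Γ γ' → γ = γ' := fun A _ _ _ _ hγ hγ' =>
    hγ.unique (hwinj.mono (coe_subset.mpr hΓE)) hγ'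
  calc expSubsets p E
        (fun A => if h ∈ candidates w E A ∧ HasLighterCandidateAt w E A u h then 1 else 0)
      = ∑ γ ∈ Γ, expSubsets p E (fun A =>
          if γ ∉ A ∧ (h ∈ candidates w E A ∧ IsHeaviestInGreedyWith w A Γ γ) then 1 else 0) := by
        rw [← expSubsets_sum]
        refine expSubsets_congr fun A hA => ?_
        rw [sum_boole_eq_ite_exists fun γ hγ γ' hγ' h₁ h₂ => huniq A γ hγ γ' hγ' h₁.2.2 h₂.2.2]
        refine if_congr ?_ rfl rfl
        rw [hasLighterCandidateAt_iff hwinj hA]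
        exact ⟨fun ⟨hC, γ, hγ, hγA, hγH⟩ => ⟨γ, hγ, hγA, hC, hγH⟩,
          fun ⟨γ, hγ, hγA, hC, hγH⟩ => ⟨hC, γ, hγ, hγA, hγH⟩⟩
    _ = ∑ γ ∈ Γ, (1 - p) * expSubsets p E (fun A =>
          if h ∈ candidates w E A ∧ IsHeaviestInGreedyWith w A Γ γ then 1 else 0) := by
        refine sum_congr rfl fun γ hγ => expSubsets_indicator_notMem
          (P := fun A => h ∈ candidates w E A ∧ IsHeaviestInGreedyWith w A Γ γ) (hΓE hγ)
          fun A hA => ?_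
        exact and_congr (mem_candidates_insert_of_lt hwinj hA (hΓE hγ) (mem_filter.mp hγ).2.1)
          (isHeaviestInGreedyWith_insert_iff hwinj hA hΓE (hΓE hγ))
    _ = (1 - p) * expSubsets p E (fun A =>
          if ∃ γ ∈ Γ, h ∈ candidates w E A ∧ IsHeaviestInGreedyWith w A Γ γ then 1 else 0) := by
        rw [← mul_sum, ← expSubsets_sum]
        congr 1
        exact expSubsets_congr fun A _ =>
          sum_boole_eq_ite_exists fun γ hγ γ' hγ' h₁ h₂ => huniq A γ hγ γ' hγ' h₁.2 h₂.2
    _ ≤ (1 - p) * expSubsets p E (fun A => if h ∈ candidates w E A then 1 else 0) := by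
        refine mul_le_mul_of_nonneg_left (expSubsets_mono hp fun A _ => ?_)
          (sub_nonneg.mpr hp.2)
        split_ifs <;> simp_all

theorem expSubsets_mem_candidates {h : V × V} (hh : h ∈ E) :
    expSubsets p E (fun A => if h ∈ candidates w E A then 1 else 0)
      = (1 - p) * expSubsets p E (fun A => if InGreedyWith w A h then 1 else 0) := by
  rw [← expSubsets_indicator_notMem hh fun A _ => inGreedyWith_insert_self]
  exact expSubsets_congr fun A _ => by simp [mem_candidates, hh]

theorem expSubsets_mem_greedy {h : V × V} (hh : h ∈ E) :
    expSubsets p E (fun A => if h ∈ greedy w gconf A then 1 else 0)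
      = p * expSubsets p E (fun A => if InGreedyWith w A h then 1 else 0) := by
  rw [← expSubsets_indicator_mem hh fun A _ => inGreedyWith_insert_self]
  exact expSubsets_congr fun A _ => by simp [mem_greedy_iff_inGreedyWith]

end Probabilities

section Weights

variable {V : Type*} [DecidableEq V] {w : V × V → ℝ} {E : Finset (V × V)} {p : ℝ}

variable (w E p) in
noncomputable def inGreedyWithMass : ℝ :=
  ∑ h ∈ E, w h * expSubsets p E (fun A => if InGreedyWith w A h then 1 else 0)

theorem expSubsets_weight_greedy :
    expSubsets p E (fun A => ∑ e ∈ greedy w gconf A, w e) = p * inGreedyWithMass w E p := by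
  rw [expSubsets_sum_weight fun A hA => (greedy_subset w A).trans hA, inGreedyWithMass, mul_sum]
  exact sum_congr rfl fun h hh => by rw [expSubsets_mem_greedy hh]; ring

theorem expSubsets_weight_candidates :
    expSubsets p E (fun A => ∑ e ∈ candidates w E A, w e)
      = (1 - p) * inGreedyWithMass w E p := by
  rw [expSubsets_sum_weight (F := candidates w E) fun _ _ => filter_subset _ E,
    inGreedyWithMass, mul_sum]
  exact sum_congr rfl fun h hh => by rw [expSubsets_mem_candidates hh]; ring

variable {σ : Finset (V × V) → List (V × V)}

theorem expSubsets_weight_lost_le (hp : p ∈ Set.Icc (0 : ℝ) 1) (hwinj : Set.InjOn w E)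
    (hw0 : ∀ e ∈ E, 0 ≤ w e) (hσ : ∀ A x, x ∈ σ A ↔ x ∈ E \ A) :
    expSubsets p E (fun A => ∑ e ∈ candidates w E A \ runE w A (σ A), w e)
      ≤ 2 * (1 - p) ^ 2 * inGreedyWithMass w E p := by
  calc expSubsets p E (fun A => ∑ e ∈ candidates w E A \ runE w A (σ A), w e)
      ≤ expSubsets p E (fun A => ∑ x ∈ E ×ˢ (univ : Finset Bool), w x.1 *
          if x.1 ∈ candidates w E A ∧ HasLighterCandidateAt w E A (endpoint x.1 x.2) x.1
          then 1 else 0) :=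
        expSubsets_mono hp fun A _ => sum_candidates_sdiff_le hwinj hw0
          (runE_subset_candidates fun x hx => (hσ A x).mp hx)
          fun e he => mem_runE_or_conflict (hσ A) he
    _ ≤ ∑ x ∈ E ×ˢ (univ : Finset Bool), w x.1 * ((1 - p) * ((1 - p) *
          expSubsets p E (fun A => if InGreedyWith w A x.1 then 1 else 0))) := by
        simp only [expSubsets_sum, expSubsets_const_mul]
        refine sum_le_sum fun x hx => mul_le_mul_of_nonneg_left ?_ (hw0 _ (mem_product.mp hx).1)
        rw [← expSubsets_mem_candidates (mem_product.mp hx).1]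
        exact expSubsets_candidate_lighterAt_le hp hwinj _
    _ = 2 * (1 - p) ^ 2 * inGreedyWithMass w E p := by
        rw [sum_product, inGreedyWithMass, mul_sum]
        exact sum_congr rfl fun h _ => by rw [Fintype.sum_bool]; ring

theorem expSubsets_weight_runE_ge (hp : p ∈ Set.Icc (0 : ℝ) 1) (hwinj : Set.InjOn w E)
    (hw0 : ∀ e ∈ E, 0 ≤ w e) (hσ : ∀ A x, x ∈ σ A ↔ x ∈ E \ A) :
    (1 - p) * (2 * p - 1) * inGreedyWithMass w E p
      ≤ expSubsets p E (fun A => ∑ e ∈ runE w A (σ A), w e) := by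
  have hsplit : expSubsets p E (fun A => ∑ e ∈ runE w A (σ A), w e)
      = expSubsets p E (fun A => ∑ e ∈ candidates w E A, w e)
        - expSubsets p E (fun A => ∑ e ∈ candidates w E A \ runE w A (σ A), w e) := by
    rw [← expSubsets_sub]
    refine expSubsets_congr fun A _ => ?_
    rw [← sum_sdiff (runE_subset_candidates fun x hx => (hσ A x).mp hx)]
    ring
  rw [hsplit, expSubsets_weight_candidates]
  linarith [expSubsets_weight_lost_le hp hwinj hw0 hσ]

end Weights

end GreedyMatching

open GreedyMatching in
theorem stmt16_general {V : Type*} [DecidableEq V]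
    (E : Finset (V × V)) (w : V × V → ℝ)
    (hw0 : ∀ e ∈ E, 0 ≤ w e) (hwinj : Set.InjOn w ↑E)
    (p : ℝ) (hp : p ∈ Set.Icc (0 : ℝ) 1)
    (σ : Finset (V × V) → List (V × V))
    (hσ : ∀ A : Finset (V × V), (σ A).Perm (E \ A).toList) :
    expSubsets p E (fun E' => ∑ e ∈ runE w E' (σ E'), w e)
      ≥ ((1 - p) * (2 * p - 1) / p) * expSubsets p E (fun E' => ∑ e ∈ greedy w gconf E', w e) := by
  have hσ' : ∀ A x, x ∈ σ A ↔ x ∈ E \ A := fun A x => (hσ A).mem_iff.trans mem_toList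
  rw [ge_iff_le, expSubsets_weight_greedy]
  rcases eq_or_ne p 0 with rfl | hp0
  · rw [div_zero, zero_mul]
    refine expSubsets_nonneg hp fun A _ => sum_nonneg fun e he => hw0 e ?_
    exact (mem_candidates.mp (runE_subset_candidates (fun x hx => (hσ' A x).mp hx) he)).1
  · calc (1 - p) * (2 * p - 1) / p * (p * inGreedyWithMass w E p)
        = (1 - p) * (2 * p - 1) * inGreedyWithMass w E p := by field_simp
      _ ≤ _ := expSubsets_weight_runE_ge hp hwinj hw0 hσ'

/-- Credit edge reimbursement: for the greedy-based edge-arrival algorithm with edge-sampling probability `p`, and every arrival-order rule of `E \ E'`, `E[w(M)] ≥ ((1-p)(2p-1)/p) · E[w(Greedy(G[E']))]`. -/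
theorem stmt16 {V : Type*} [DecidableEq V]
    (E : Finset (V × V)) (w : V × V → ℝ)
    (hprop : ∀ e ∈ E, e.1 ≠ e.2) (hw0 : ∀ e ∈ E, 0 ≤ w e) (hwinj : Set.InjOn w ↑E)
    (p : ℝ) (hp : p ∈ Set.Icc (0 : ℝ) 1)
    (σ : Finset (V × V) → List (V × V))
    (hσ : ∀ A : Finset (V × V), (σ A).Perm (E \ A).toList) :
    expSubsets p E (fun E' => ∑ e ∈ runE w E' (σ E'), w e)
      ≥ ((1 - p) * (2 * p - 1) / p) * expSubsets p E (fun E' => ∑ e ∈ greedy w gconf E', w e) :=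
  stmt16_general E w hw0 hwinj p hp σ hσ
end
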